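/- arXiv:2004.10180 — 10 statements merged into one kernel-verified Lean document; each statement's English description precedes it below -/
import Mathlib

section
/- Let X be a nonnegative real-valued random variable with E[X] = μ ≤ 1, and define Φ(x) = x² for 0 ≤ x ≤ 2 and Φ(x) = 4x − 4 for x > 2. Then (1/4)(E|X − μ|)² ≤ E[Φ(X)] − Φ(E[X]). -/
open MeasureTheory

/-- The convex function `Φ(x) = x²` for `x ≤ 2` and `Φ(x) = 4x − 4` for `x > 2`. -/
noncomputable def Phi (x : ℝ) : ℝ := if x ≤ 2 then x ^ 2 else 4 * x - 4

lemma Phi_key {μ t x : ℝ} (hμ0 : 0 ≤ μ) (hμ1 : μ ≤ 1) (ht0 : 0 ≤ t) (ht2 : t ≤ 2)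
    (hx : 0 ≤ x) :
    μ ^ 2 + 2 * μ * (x - μ) + (t / 2) * |x - μ| - t ^ 2 / 4 ≤ Phi x := by
  unfold Phi
  rcases abs_cases (x - μ) with ⟨h1, h2⟩ | ⟨h1, h2⟩ <;> rw [h1] <;> split_ifs with h <;>
    nlinarith [sq_nonneg (x - μ - t / 4), sq_nonneg (x - μ + t / 4), sq_nonneg (2 - μ - t / 4),
      sq_nonneg (x - 2), sq_nonneg t]

lemma Phi_measurable : Measurable Phi := by
  unfold Phi
  exact Measurable.ite (measurableSet_le measurable_id measurable_const)
    (by fun_prop) (by fun_prop)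

theorem defect_inequality {Ω : Type*} [MeasurableSpace Ω] (P : Measure Ω)
    [IsProbabilityMeasure P] (X : Ω → ℝ) (hXint : Integrable X P)
    (hX0 : ∀ᵐ ω ∂P, 0 ≤ X ω) (μ : ℝ) (hμ : ∫ ω, X ω ∂P = μ) (hμ1 : μ ≤ 1) :
    (1 / 4) * (∫ ω, |X ω - μ| ∂P) ^ 2 ≤ (∫ ω, Phi (X ω) ∂P) - Phi μ := by
  have hμ0 : 0 ≤ μ := hμ ▸ integral_nonneg_of_ae hX0
  set t : ℝ := ∫ ω, |X ω - μ| ∂P with ht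
  have habs : Integrable (fun ω => |X ω - μ|) P := (hXint.sub (integrable_const μ)).abs
  have ht0 : 0 ≤ t := integral_nonneg fun ω => abs_nonneg _
  have ht2 : t ≤ 2 := by
    have : t ≤ ∫ ω, (X ω + μ) ∂P := by
      refine integral_mono_ae habs (hXint.add (integrable_const μ)) ?_
      filter_upwards [hX0] with ω h0
      rw [abs_sub_comm]
      calc |μ - X ω| ≤ |μ| + |X ω| := abs_sub _ _
        _ ≤ X ω + μ := by rw [abs_of_nonneg hμ0, abs_of_nonneg h0]; linarith
    rw [integral_add hXint (integrable_const μ), hμ, integral_const] at this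
    simp at this
    linarith
  -- integrability of Phi ∘ X
  have hPhiInt : Integrable (fun ω => Phi (X ω)) P := by
    refine Integrable.mono' ((hXint.const_mul 4).add (integrable_const 4))
      (Phi_measurable.comp_aemeasurable hXint.aemeasurable).aestronglyMeasurable ?_
    filter_upwards [hX0] with ω h0
    simp only [Pi.add_apply, Real.norm_eq_abs]
    unfold Phi
    split_ifs with h
    · rw [abs_of_nonneg (sq_nonneg _)]; nlinarith
    · push_neg at h
      rw [abs_of_nonneg (by linarith : (0:ℝ) ≤ 4 * X ω - 4)]; linarith
  -- lower bound function
  have i1 : Integrable (fun ω => 2 * μ * (X ω - μ)) P :=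
    (hXint.sub (integrable_const μ)).const_mul _
  have i2 : Integrable (fun ω => (t / 2) * |X ω - μ|) P := habs.const_mul _
  have i3 : Integrable (fun ω => μ ^ 2 + 2 * μ * (X ω - μ)) P := (integrable_const _).add i1
  have i4 : Integrable (fun ω => μ ^ 2 + 2 * μ * (X ω - μ) + (t / 2) * |X ω - μ|) P := i3.add i2
  have hgInt : Integrable (fun ω => μ ^ 2 + 2 * μ * (X ω - μ) + (t / 2) * |X ω - μ| - t ^ 2 / 4) P :=
    i4.sub (integrable_const _)
  have hle : ∫ ω, (μ ^ 2 + 2 * μ * (X ω - μ) + (t / 2) * |X ω - μ| - t ^ 2 / 4) ∂P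
      ≤ ∫ ω, Phi (X ω) ∂P := by
    refine integral_mono_ae hgInt hPhiInt ?_
    filter_upwards [hX0] with ω h0
    exact Phi_key hμ0 hμ1 ht0 ht2 h0
  have hcalc : ∫ ω, (μ ^ 2 + 2 * μ * (X ω - μ) + (t / 2) * |X ω - μ| - t ^ 2 / 4) ∂P
      = μ ^ 2 + t ^ 2 / 4 := by
    have isub : Integrable (fun ω => X ω - μ) P := hXint.sub (integrable_const μ)
    rw [integral_sub i4 (integrable_const _), integral_add i3 i2,
      integral_add (integrable_const _) i1,
      MeasureTheory.integral_const_mul, MeasureTheory.integral_const_mul,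
      integral_sub hXint (integrable_const μ), hμ, integral_const, integral_const]
    simp [← ht]
    ring
  have hPhiμ : Phi μ = μ ^ 2 := by unfold Phi; rw [if_pos (by linarith)]
  rw [hPhiμ]
  rw [hcalc] at hle
  linarith
end

section
/- Let G be a bipartite graph with nonempty parts A and B and m edges. If m ≥ 4|A||B|^{1/2} + 4|B|, then the number of 4-cycles in G is at least m⁴ |A|⁻² |B|⁻² / 64. -/
open Finset

lemma offdiag_sq_aux {β : Type*} [Fintype β] [DecidableEq β] (g : β → ℝ)
    (hg : ∀ y, g y * g y = g y) :
    ∑ y : β, ∑ y' : β, (if y = y' then (0:ℝ) else 1) * (g y * g y')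
      = (∑ y : β, g y) ^ 2 - ∑ y : β, g y := by
  have h : ∀ y : β, ∑ y' : β, (if y = y' then (0:ℝ) else 1) * (g y * g y')
      = g y * (∑ y' : β, g y') - g y := by
    intro y
    have h1 : ∀ y' : β, (if y = y' then (0:ℝ) else 1) * (g y * g y')
        = g y * g y' - (if y = y' then g y * g y' else 0) := by
      intro y'; split_ifs <;> ring
    rw [Finset.sum_congr rfl fun y' _ => h1 y', Finset.sum_sub_distrib,
      Finset.sum_ite_eq, if_pos (Finset.mem_univ y), ← Finset.mul_sum, hg y]
  rw [Finset.sum_congr rfl fun y _ => h y, Finset.sum_sub_distrib, ← Finset.sum_mul, sq]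

set_option maxHeartbeats 1000000

/-- **Lemma (4-cycle lower bound).** If a bipartite graph with parts `A`, `B` and `m` edges
satisfies `m ≥ 4|A||B|^{1/2} + 4|B|`, then the number of 4-cycles (counted here as the number
of ordered quadruples `(a, a', b, b')` with `a ≠ a'`, `b ≠ b'` and all four adjacencies,
divided by `4`) is at least `m⁴|A|⁻²|B|⁻²/64`. -/
theorem c4_lower_bound {A B : Type*} [Fintype A] [Fintype B] [DecidableEq A] [DecidableEq B]
    [Nonempty A] [Nonempty B] (r : A → B → Prop) [∀ a b, Decidable (r a b)] (m : ℕ)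
    (hm : m = (Finset.univ.filter (fun p : A × B => r p.1 p.2)).card)
    (hlow : 4 * (Fintype.card A : ℝ) * Real.sqrt (Fintype.card B) + 4 * (Fintype.card B : ℝ)
      ≤ (m : ℝ)) :
    (m : ℝ) ^ 4 * ((Fintype.card A : ℝ))⁻¹ ^ 2 * ((Fintype.card B : ℝ))⁻¹ ^ 2 / 64 ≤
      ((Finset.univ.filter (fun q : A × A × B × B =>
        q.1 ≠ q.2.1 ∧ q.2.2.1 ≠ q.2.2.2 ∧ r q.1 q.2.2.1 ∧ r q.1 q.2.2.2 ∧
          r q.2.1 q.2.2.1 ∧ r q.2.1 q.2.2.2)).card : ℝ) / 4 := by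
  classical
  set a : ℝ := (Fintype.card A : ℝ) with ha_def
  set b : ℝ := (Fintype.card B : ℝ) with hb_def
  set f : A → B → ℝ := fun x y => if r x y then 1 else 0 with hf_def
  have hff : ∀ x y, f x y * f x y = f x y := by
    intro x y; simp only [hf_def]; split_ifs <;> norm_num
  have hf0 : ∀ x y, 0 ≤ f x y := by
    intro x y; simp only [hf_def]; split_ifs <;> norm_num
  set C : A → A → ℝ := fun x x' => ∑ y : B, f x y * f x' y with hC_def
  set D : B → ℝ := fun y => ∑ x : A, f x y with hD_def
  set NR : ℝ := ((Finset.univ.filter (fun q : A × A × B × B =>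
        q.1 ≠ q.2.1 ∧ q.2.2.1 ≠ q.2.2.2 ∧ r q.1 q.2.2.1 ∧ r q.1 q.2.2.2 ∧
          r q.2.1 q.2.2.1 ∧ r q.2.1 q.2.2.2)).card : ℝ) with hNR_def
  set Q : ℝ := ∑ x : A, ∑ x' : A, (if x = x' then (0:ℝ) else 1) * C x x' with hQ_def
  -- m as a sum
  have hmR : (m : ℝ) = ∑ x : A, ∑ y : B, f x y := by
    rw [hm, Finset.card_filter]
    push_cast
    rw [Fintype.sum_prod_type]
  have hmD : (m : ℝ) = ∑ y : B, D y := by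
    rw [hmR, Finset.sum_comm]
  -- NR as a quadruple sum
  have hN1 : NR = ∑ x : A, ∑ x' : A, ∑ y : B, ∑ y' : B,
      (if x = x' then (0:ℝ) else 1) * ((if y = y' then (0:ℝ) else 1) *
        ((f x y * f x' y) * (f x y' * f x' y'))) := by
    rw [hNR_def, Finset.card_filter]
    push_cast
    rw [Fintype.sum_prod_type]
    refine Finset.sum_congr rfl fun x _ => ?_
    rw [Fintype.sum_prod_type]
    refine Finset.sum_congr rfl fun x' _ => ?_
    rw [Fintype.sum_prod_type]
    refine Finset.sum_congr rfl fun y _ => Finset.sum_congr rfl fun y' _ => ?_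
    simp only [hf_def]
    by_cases h1 : x = x' <;> by_cases h2 : y = y' <;> by_cases h3 : r x y <;>
      by_cases h4 : r x y' <;> by_cases h5 : r x' y <;> by_cases h6 : r x' y' <;>
      simp [h1, h2, h3, h4, h5, h6]
  have hN2 : NR = ∑ x : A, ∑ x' : A,
      (if x = x' then (0:ℝ) else 1) * ((C x x') ^ 2 - C x x') := by
    rw [hN1]
    refine Finset.sum_congr rfl fun x _ => Finset.sum_congr rfl fun x' _ => ?_
    simp only [← Finset.mul_sum]
    congr 1
    exact offdiag_sq_aux (fun y => f x y * f x' y)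
      (fun y => by rw [mul_mul_mul_comm, hff, hff])
  -- Q = ∑ D² - m
  have hQD : Q = (∑ y : B, (D y) ^ 2) - (m : ℝ) := by
    have h1 : ∀ x : A, ∑ x' : A, (if x = x' then (0:ℝ) else 1) * C x x'
        = (∑ x' : A, C x x') - C x x := by
      intro x
      have h2 : ∀ x' : A, (if x = x' then (0:ℝ) else 1) * C x x'
          = C x x' - (if x = x' then C x x' else 0) := by
        intro x'; split_ifs <;> ring
      rw [Finset.sum_congr rfl fun x' _ => h2 x', Finset.sum_sub_distrib,
        Finset.sum_ite_eq, if_pos (Finset.mem_univ x)]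
    have h3 : ∑ x : A, ∑ x' : A, C x x' = ∑ y : B, (D y) ^ 2 := by
      simp only [hC_def]
      rw [show (∑ x : A, ∑ x' : A, ∑ y : B, f x y * f x' y)
          = ∑ x : A, ∑ y : B, ∑ x' : A, f x y * f x' y from
        Finset.sum_congr rfl fun x _ => Finset.sum_comm,
        Finset.sum_comm]
      refine Finset.sum_congr rfl fun y _ => ?_
      rw [hD_def, sq, Finset.sum_mul_sum]
    have h4 : ∑ x : A, C x x = (m : ℝ) := by
      rw [hmR]
      exact Finset.sum_congr rfl fun x _ => Finset.sum_congr rfl fun y _ => hff x y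
    rw [hQ_def, Finset.sum_congr rfl fun x _ => h1 x, Finset.sum_sub_distrib, h3, h4]
  -- positivity facts
  have hC0 : ∀ x x', 0 ≤ C x x' := fun x x' =>
    Finset.sum_nonneg fun y _ => mul_nonneg (hf0 x y) (hf0 x' y)
  have hQ0 : 0 ≤ Q := by
    refine Finset.sum_nonneg fun x _ => Finset.sum_nonneg fun x' _ => ?_
    refine mul_nonneg ?_ (hC0 x x')
    split_ifs <;> norm_num
  have hNR0 : 0 ≤ NR := by rw [hNR_def]; positivity
  have ha1 : (1:ℝ) ≤ a := by
    rw [ha_def]; exact_mod_cast Fintype.card_pos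
  have hb1 : (1:ℝ) ≤ b := by
    rw [hb_def]; exact_mod_cast Fintype.card_pos
  have hm0 : (0:ℝ) ≤ m := Nat.cast_nonneg m
  -- Cauchy-Schwarz on B side : m² ≤ b * ∑ D²
  have hCS1 : (m:ℝ) ^ 2 ≤ b * ∑ y : B, (D y) ^ 2 := by
    have := sq_sum_le_card_mul_sum_sq (s := (Finset.univ : Finset B)) (f := D)
    rw [← hmD] at this
    simpa [hb_def] using this
  -- Cauchy-Schwarz on A side : Q² ≤ a² * (NR + Q)
  have hCS2 : Q ^ 2 ≤ a ^ 2 * (NR + Q) := by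
    set g : A × A → ℝ := fun p => (if p.1 = p.2 then (0:ℝ) else 1) * C p.1 p.2 with hg_def
    have hgQ : ∑ p : A × A, g p = Q := by
      rw [hQ_def, Fintype.sum_prod_type]
    have hgsq : ∑ p : A × A, (g p) ^ 2 = NR + Q := by
      rw [hN2, hQ_def, ← Finset.sum_add_distrib]
      rw [Fintype.sum_prod_type]
      refine Finset.sum_congr rfl fun x _ => ?_
      rw [← Finset.sum_add_distrib]
      refine Finset.sum_congr rfl fun x' _ => ?_
      simp only [hg_def]
      split_ifs <;> ring
    have := sq_sum_le_card_mul_sum_sq (s := (Finset.univ : Finset (A × A))) (f := g)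
    rw [hgQ, hgsq] at this
    calc Q ^ 2 ≤ (Finset.univ : Finset (A × A)).card * (NR + Q) := this
      _ = a ^ 2 * (NR + Q) := by
          rw [Finset.card_univ, Fintype.card_prod, ha_def]; push_cast; ring
  -- arithmetic
  set s : ℝ := Real.sqrt b with hs_def
  have hs0 : 0 ≤ s := Real.sqrt_nonneg b
  have hsb : s ^ 2 = b := Real.sq_sqrt (by linarith)
  have hmb : 4 * b ≤ (m:ℝ) := by nlinarith [hlow]
  have hmas : 4 * a * s ≤ (m:ℝ) := by nlinarith [hlow]
  have hm2ab : 16 * a ^ 2 * b ≤ (m:ℝ) ^ 2 := by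
    nlinarith [mul_le_mul hmas hmas (mul_nonneg (by nlinarith : (0:ℝ) ≤ 4 * a) hs0) hm0, hsb]
  have hQb : 3 * (m:ℝ) ^ 2 ≤ 4 * (Q * b) := by
    have h1 : (m:ℝ) ^ 2 - (m:ℝ) * b ≤ Q * b := by nlinarith [hCS1, hQD, hb1]
    nlinarith [hmb, hm0, hb1]
  have hQ12 : 12 * a ^ 2 ≤ Q := by nlinarith [hQb, hm2ab, hb1]
  have key : (m:ℝ) ^ 4 ≤ 16 * a ^ 2 * b ^ 2 * NR := by
    have h1 : 11 * Q ^ 2 ≤ 12 * (a ^ 2 * NR) := by nlinarith [hCS2, hQ12, hQ0]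
    have h2 : 9 * (m:ℝ) ^ 4 ≤ 16 * (Q ^ 2 * b ^ 2) := by nlinarith [hQb, hm0, hQ0, hb1]
    nlinarith [h1, h2, hb1, hNR0, mul_le_mul_of_nonneg_right h1 (by nlinarith : (0:ℝ) ≤ b ^ 2)]
  -- conclude
  have ha0 : (0:ℝ) < a := by linarith
  have hb0 : (0:ℝ) < b := by linarith
  rw [div_le_div_iff₀ (by norm_num) (by norm_num)]
  have heq : (m:ℝ) ^ 4 * a⁻¹ ^ 2 * b⁻¹ ^ 2 * (a ^ 2 * b ^ 2) = (m:ℝ) ^ 4 := by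
    field_simp
  nlinarith [key, mul_pos (mul_pos ha0 ha0) (mul_pos hb0 hb0),
    mul_le_mul_of_nonneg_left key (by positivity : (0:ℝ) ≤ a⁻¹ ^ 2 * b⁻¹ ^ 2), heq,
    sq_nonneg (a*b)]
end

section
/- Let V₁, V₂, V₃ be finite nonempty sets, f₁₂ : V₁ × V₂ → ℝ and f₂₃ : V₂ × V₃ → ℝ with f₂₃ taking nonnegative values, and suppose E_{x₃∈V₃} f₂₃(x₂, x₃) ≤ M for every x₂ ∈ V₂. Define (f₁₂ ∘ f₂₃)(x₁,x₃) = E_{x₂∈V₂} f₁₂(x₁,x₂) f₂₃(x₂,x₃). Then ‖f₁₂ ∘ f₂₃‖_□ ≤ M ‖f₁₂‖_□. -/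
open Finset

/-!
For test functions `a` on `V₁` and `c` on `V₃`, exchanging the order of averaging shows that the
cut form of the composition against `(a, c)` equals the cut form of `f₁₂` against `(a, b)` with
`b(x₂) = E_{x₃} f₂₃(x₂, x₃) c(x₃)`. Nonnegativity of `f₂₃` and the row bound give `0 ≤ b ≤ M`,
so `b / M` is again a test function and the cut form is at most `M ‖f₁₂‖_□`.
-/

/-- The cut norm of `f : V × W → ℝ` (with respect to uniform measures):
the supremum over `[0,1]`-valued functions `a`, `b` of `|E[f(x,y)a(x)b(y)]|`. -/
noncomputable def cutNorm {V W : Type*} [Fintype V] [Fintype W] (f : V → W → ℝ) : ℝ :=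
  ⨆ p : {a : V → ℝ // ∀ x, a x ∈ Set.Icc (0 : ℝ) 1} ×
      {b : W → ℝ // ∀ y, b y ∈ Set.Icc (0 : ℝ) 1},
    |(∑ x, ∑ y, f x y * p.1.1 x * p.2.1 y) / ((Fintype.card V : ℝ) * (Fintype.card W : ℝ))|

section CutForm

variable {V W : Type*} [Fintype V] [Fintype W]

noncomputable def cutForm (f : V → W → ℝ) (a : V → ℝ) (b : W → ℝ) : ℝ :=
  (∑ x, ∑ y, f x y * a x * b y) / ((Fintype.card V : ℝ) * (Fintype.card W : ℝ))

lemma abs_cutForm_le_sum_abs (f : V → W → ℝ) {a : V → ℝ} {b : W → ℝ}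
    (ha : ∀ x, a x ∈ Set.Icc (0 : ℝ) 1) (hb : ∀ y, b y ∈ Set.Icc (0 : ℝ) 1) :
    |cutForm f a b| ≤
      (∑ x, ∑ y, |f x y|) / ((Fintype.card V : ℝ) * (Fintype.card W : ℝ)) := by
  rw [cutForm, abs_div, abs_of_nonneg (a := _ * _) (by positivity)]
  refine div_le_div_of_nonneg_right ?_ (by positivity)
  refine (abs_sum_le_sum_abs _ _).trans (sum_le_sum fun x _ => ?_)
  refine (abs_sum_le_sum_abs _ _).trans (sum_le_sum fun y _ => ?_)
  rw [abs_mul, abs_mul, abs_of_nonneg (ha x).1, abs_of_nonneg (hb y).1]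
  calc |f x y| * a x * b y ≤ |f x y| * 1 * 1 := by
        gcongr
        exacts [(hb y).1, (ha x).2, (hb y).2]
    _ = |f x y| := by ring

lemma cutNorm_nonneg (f : V → W → ℝ) : 0 ≤ cutNorm f :=
  Real.iSup_nonneg fun _ => abs_nonneg _

lemma abs_cutForm_le_cutNorm (f : V → W → ℝ) {a : V → ℝ} {b : W → ℝ}
    (ha : ∀ x, a x ∈ Set.Icc (0 : ℝ) 1) (hb : ∀ y, b y ∈ Set.Icc (0 : ℝ) 1) :
    |cutForm f a b| ≤ cutNorm f :=
  le_ciSup ⟨_, Set.forall_mem_range.2 fun p => abs_cutForm_le_sum_abs f p.1.2 p.2.2⟩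
    (⟨⟨a, ha⟩, ⟨b, hb⟩⟩ : {a : V → ℝ // ∀ x, a x ∈ Set.Icc (0 : ℝ) 1} ×
      {b : W → ℝ // ∀ y, b y ∈ Set.Icc (0 : ℝ) 1})

lemma cutForm_div_const (f : V → W → ℝ) (a : V → ℝ) (b : W → ℝ) (M : ℝ) :
    cutForm f a (fun y => b y / M) = cutForm f a b / M := by
  simp only [cutForm, mul_div_assoc', sum_div, div_div, mul_comm M]

lemma abs_cutForm_le_mul_cutNorm (f : V → W → ℝ) {a : V → ℝ} {b : W → ℝ} {M : ℝ} (hM : 0 ≤ M)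
    (ha : ∀ x, a x ∈ Set.Icc (0 : ℝ) 1) (hb : ∀ y, b y ∈ Set.Icc 0 M) :
    |cutForm f a b| ≤ M * cutNorm f := by
  obtain rfl | hM := hM.eq_or_lt
  · have hb0 : b = 0 := funext fun y => le_antisymm (hb y).2 (hb y).1
    simp [cutForm, hb0]
  have hbM : ∀ y, b y / M ∈ Set.Icc (0 : ℝ) 1 := fun y =>
    ⟨div_nonneg (hb y).1 hM.le, div_le_one_of_le₀ (hb y).2 hM.le⟩
  have := abs_cutForm_le_cutNorm f ha hbM
  rwa [cutForm_div_const, abs_div, abs_of_pos hM, div_le_iff₀' hM] at this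

end CutForm

lemma cutForm_compose {V₁ V₂ V₃ : Type*} [Fintype V₁] [Fintype V₂] [Fintype V₃]
    (f₁₂ : V₁ → V₂ → ℝ) (f₂₃ : V₂ → V₃ → ℝ) (a : V₁ → ℝ) (c : V₃ → ℝ) :
    cutForm (fun x₁ x₃ => (∑ x₂, f₁₂ x₁ x₂ * f₂₃ x₂ x₃) / (Fintype.card V₂ : ℝ)) a c =
      cutForm f₁₂ a (fun x₂ => (∑ x₃, f₂₃ x₂ x₃ * c x₃) / (Fintype.card V₃ : ℝ)) := by
  simp only [cutForm, sum_div, sum_mul, mul_sum]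
  refine sum_congr rfl fun x₁ _ => ?_
  rw [sum_comm]
  refine sum_congr rfl fun x₂ _ => sum_congr rfl fun x₃ _ => ?_
  ring

lemma mean_mul_mem_Icc {W : Type*} [Fintype W] {g c : W → ℝ} {M : ℝ} (hg : ∀ y, 0 ≤ g y)
    (hgM : (∑ y, g y) / (Fintype.card W : ℝ) ≤ M) (hc : ∀ y, c y ∈ Set.Icc (0 : ℝ) 1) :
    (∑ y, g y * c y) / (Fintype.card W : ℝ) ∈ Set.Icc 0 M := by
  refine ⟨div_nonneg (sum_nonneg fun y _ => mul_nonneg (hg y) (hc y).1) (Nat.cast_nonneg _),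
    hgM.trans' ?_⟩
  refine div_le_div_of_nonneg_right (sum_le_sum fun y _ => ?_) (Nat.cast_nonneg _)
  exact mul_le_of_le_one_right (hg y) (hc y).2

theorem cutNorm_compose_le_general {V₁ V₂ V₃ : Type*} [Fintype V₁] [Fintype V₂] [Fintype V₃]
    [Nonempty V₂]
    (f₁₂ : V₁ → V₂ → ℝ) (f₂₃ : V₂ → V₃ → ℝ) (M : ℝ)
    (h0 : ∀ x₂ x₃, 0 ≤ f₂₃ x₂ x₃)
    (hM : ∀ x₂, (∑ x₃, f₂₃ x₂ x₃) / (Fintype.card V₃ : ℝ) ≤ M) :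
    cutNorm (fun x₁ x₃ => (∑ x₂, f₁₂ x₁ x₂ * f₂₃ x₂ x₃) / (Fintype.card V₂ : ℝ)) ≤
      M * cutNorm f₁₂ := by
  have hM0 : 0 ≤ M := (div_nonneg (sum_nonneg fun x₃ _ => h0 _ x₃) (Nat.cast_nonneg _)).trans
    (hM (Classical.arbitrary V₂))
  refine Real.iSup_le (fun ⟨⟨a, ha⟩, ⟨c, hc⟩⟩ => ?_) (mul_nonneg hM0 (cutNorm_nonneg f₁₂))
  change |cutForm _ a c| ≤ _
  rw [cutForm_compose]
  exact abs_cutForm_le_mul_cutNorm f₁₂ hM0 ha fun x₂ => mean_mul_mem_Icc (h0 x₂) (hM x₂) hc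

theorem cutNorm_compose_le {V₁ V₂ V₃ : Type*} [Fintype V₁] [Fintype V₂] [Fintype V₃]
    [Nonempty V₁] [Nonempty V₂] [Nonempty V₃]
    (f₁₂ : V₁ → V₂ → ℝ) (f₂₃ : V₂ → V₃ → ℝ) (M : ℝ)
    (h0 : ∀ x₂ x₃, 0 ≤ f₂₃ x₂ x₃)
    (hM : ∀ x₂, (∑ x₃, f₂₃ x₂ x₃) / (Fintype.card V₃ : ℝ) ≤ M) :
    cutNorm (fun x₁ x₃ => (∑ x₂, f₁₂ x₁ x₂ * f₂₃ x₂ x₃) / (Fintype.card V₂ : ℝ)) ≤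
      M * cutNorm f₁₂ :=
  cutNorm_compose_le_general f₁₂ f₂₃ M h0 hM
end

section
/- Let V₁, V₂, V₃ be finite nonempty sets and f₁₂ : V₁ × V₂ → ℝ, f₁₃ : V₁ × V₃ → ℝ, f₂₃ : V₂ × V₃ → ℝ, with f₁₂ and f₁₃ taking only nonnegative values. Then E_{x₁,x₂,x₃} f₁₂(x₁,x₂) f₁₃(x₁,x₃) f₂₃(x₂,x₃) ≤ ‖f₁₂‖_∞ · ‖f₁₃‖_∞ · ‖f₂₃‖_□. -/
open Finset

/-- The sup norm of `f : V × W → ℝ`. -/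
noncomputable def supNorm {V W : Type*} [Fintype V] [Fintype W] (f : V → W → ℝ) : ℝ :=
  ⨆ p : V × W, |f p.1 p.2|

/-! For fixed `x₁`, the weights `f₁₂ x₁ · / ‖f₁₂‖_∞` and `f₁₃ x₁ · / ‖f₁₃‖_∞` take values in
`[0, 1]`, so the average of `f₂₃` against them is one of the test averages defining `‖f₂₃‖_□`.
Averaging this bound over `x₁` gives the triangle counting inequality. -/

section

variable {V W : Type*} [Fintype V] [Fintype W]

lemma abs_le_supNorm (f : V → W → ℝ) (x : V) (y : W) : |f x y| ≤ supNorm f :=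
  le_ciSup (Set.finite_range fun p : V × W => |f p.1 p.2|).bddAbove (x, y)

lemma le_supNorm (f : V → W → ℝ) (x : V) (y : W) : f x y ≤ supNorm f :=
  (le_abs_self _).trans (abs_le_supNorm f x y)

lemma supNorm_nonneg (f : V → W → ℝ) : 0 ≤ supNorm f :=
  Real.iSup_nonneg fun _ => abs_nonneg _

lemma abs_sum_mul_mul_le_sum_abs (f : V → W → ℝ) {a : V → ℝ} {b : W → ℝ}
    (ha : ∀ x, a x ∈ Set.Icc (0 : ℝ) 1) (hb : ∀ y, b y ∈ Set.Icc (0 : ℝ) 1) :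
    |∑ x, ∑ y, f x y * a x * b y| ≤ ∑ x, ∑ y, |f x y| := by
  refine (abs_sum_le_sum_abs _ _).trans (sum_le_sum fun x _ => ?_)
  refine (abs_sum_le_sum_abs _ _).trans (sum_le_sum fun y _ => ?_)
  rw [abs_mul, abs_mul, abs_of_nonneg (ha x).1, abs_of_nonneg (hb y).1, mul_assoc]
  exact mul_le_of_le_one_right (abs_nonneg _) (mul_le_one₀ (ha x).2 (hb y).1 (hb y).2)

lemma le_cutNorm (f : V → W → ℝ) {a : V → ℝ} {b : W → ℝ}
    (ha : ∀ x, a x ∈ Set.Icc (0 : ℝ) 1) (hb : ∀ y, b y ∈ Set.Icc (0 : ℝ) 1) :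
    |(∑ x, ∑ y, f x y * a x * b y) / ((Fintype.card V : ℝ) * (Fintype.card W : ℝ))| ≤
      cutNorm f := by
  unfold cutNorm
  refine le_ciSup_of_le ⟨(∑ x, ∑ y, |f x y|) / ((Fintype.card V : ℝ) * (Fintype.card W : ℝ)),
    Set.forall_mem_range.2 fun p => ?_⟩ (⟨a, ha⟩, ⟨b, hb⟩) le_rfl
  have hcard : (0 : ℝ) ≤ Fintype.card V * Fintype.card W := by positivity
  rw [abs_div, abs_of_nonneg hcard]
  exact div_le_div_of_nonneg_right (abs_sum_mul_mul_le_sum_abs f p.1.2 p.2.2) hcard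

lemma sum_mul_mul_le_card_mul_cutNorm (f : V → W → ℝ) {a : V → ℝ} {b : W → ℝ}
    (ha : ∀ x, a x ∈ Set.Icc (0 : ℝ) 1) (hb : ∀ y, b y ∈ Set.Icc (0 : ℝ) 1) :
    ∑ x, ∑ y, f x y * a x * b y ≤
      (Fintype.card V : ℝ) * (Fintype.card W : ℝ) * cutNorm f := by
  rcases isEmpty_or_nonempty V with hV | hV
  · simp
  rcases isEmpty_or_nonempty W with hW | hW
  · simp
  have h := (le_abs_self _).trans (le_cutNorm f ha hb)
  rwa [div_le_iff₀ (by positivity), mul_comm] at h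

lemma sum_mul_mul_le_mul_card_mul_cutNorm (f : V → W → ℝ) {a : V → ℝ} {b : W → ℝ} {A B : ℝ}
    (hA : 0 ≤ A) (hB : 0 ≤ B) (ha : ∀ x, a x ∈ Set.Icc 0 A) (hb : ∀ y, b y ∈ Set.Icc 0 B) :
    ∑ x, ∑ y, f x y * a x * b y ≤
      A * B * ((Fintype.card V : ℝ) * (Fintype.card W : ℝ) * cutNorm f) := by
  -- also for `C = 0`, where `c = 0` and `c / C = 0`
  have rescale : ∀ {c C : ℝ}, c ∈ Set.Icc 0 C → C * (c / C) = c := fun hc =>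
    mul_div_cancel_of_imp' fun hC => le_antisymm (hC ▸ hc.2) hc.1
  have unit : ∀ {c C : ℝ}, 0 ≤ C → c ∈ Set.Icc 0 C → c / C ∈ Set.Icc (0 : ℝ) 1 := fun hC hc =>
    ⟨div_nonneg hc.1 hC, div_le_one_of_le₀ hc.2 hC⟩
  calc ∑ x, ∑ y, f x y * a x * b y
      = A * B * ∑ x, ∑ y, f x y * (a x / A) * (b y / B) := by
        simp only [mul_sum]
        refine sum_congr rfl fun x _ => sum_congr rfl fun y _ => ?_
        conv_lhs => rw [← rescale (ha x), ← rescale (hb y)]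
        ring
    _ ≤ A * B * ((Fintype.card V : ℝ) * (Fintype.card W : ℝ) * cutNorm f) := by
        gcongr
        exact sum_mul_mul_le_card_mul_cutNorm f (fun x => unit hA (ha x)) (fun y => unit hB (hb y))

end

theorem dense_triangle_counting_general {V₁ V₂ V₃ : Type*} [Fintype V₁] [Fintype V₂] [Fintype V₃]
    (f₁₂ : V₁ → V₂ → ℝ) (f₁₃ : V₁ → V₃ → ℝ) (f₂₃ : V₂ → V₃ → ℝ)
    (h₁₂ : ∀ x y, 0 ≤ f₁₂ x y) (h₁₃ : ∀ x y, 0 ≤ f₁₃ x y) :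
    (∑ x₁, ∑ x₂, ∑ x₃, f₁₂ x₁ x₂ * f₁₃ x₁ x₃ * f₂₃ x₂ x₃) /
        ((Fintype.card V₁ : ℝ) * (Fintype.card V₂ : ℝ) * (Fintype.card V₃ : ℝ)) ≤
      supNorm f₁₂ * supNorm f₁₃ * cutNorm f₂₃ := by
  have fiber : ∀ x₁, ∑ x₂, ∑ x₃, f₁₂ x₁ x₂ * f₁₃ x₁ x₃ * f₂₃ x₂ x₃ ≤
      supNorm f₁₂ * supNorm f₁₃ *
        ((Fintype.card V₂ : ℝ) * (Fintype.card V₃ : ℝ) * cutNorm f₂₃) := fun x₁ => by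
    have h := sum_mul_mul_le_mul_card_mul_cutNorm f₂₃ (supNorm_nonneg f₁₂) (supNorm_nonneg f₁₃)
      (fun x₂ => ⟨h₁₂ x₁ x₂, le_supNorm f₁₂ x₁ x₂⟩) (fun x₃ => ⟨h₁₃ x₁ x₃, le_supNorm f₁₃ x₁ x₃⟩)
    refine le_of_eq_of_le (sum_congr rfl fun x₂ _ => sum_congr rfl fun x₃ _ => ?_) h
    ring
  refine div_le_of_le_mul₀ (by positivity)
    (mul_nonneg (mul_nonneg (supNorm_nonneg _) (supNorm_nonneg _)) (cutNorm_nonneg _)) ?_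
  calc ∑ x₁, ∑ x₂, ∑ x₃, f₁₂ x₁ x₂ * f₁₃ x₁ x₃ * f₂₃ x₂ x₃
      ≤ ∑ _x₁ : V₁, supNorm f₁₂ * supNorm f₁₃ *
          ((Fintype.card V₂ : ℝ) * (Fintype.card V₃ : ℝ) * cutNorm f₂₃) :=
        sum_le_sum fun x₁ _ => fiber x₁
    _ = _ := by
        rw [sum_const, card_univ, nsmul_eq_mul]
        ring

/-- **Triangle counting lemma for dense graphs.** -/
theorem dense_triangle_counting {V₁ V₂ V₃ : Type*} [Fintype V₁] [Fintype V₂] [Fintype V₃]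
    [Nonempty V₁] [Nonempty V₂] [Nonempty V₃]
    (f₁₂ : V₁ → V₂ → ℝ) (f₁₃ : V₁ → V₃ → ℝ) (f₂₃ : V₂ → V₃ → ℝ)
    (h₁₂ : ∀ x y, 0 ≤ f₁₂ x y) (h₁₃ : ∀ x y, 0 ≤ f₁₃ x y) :
    (∑ x₁, ∑ x₂, ∑ x₃, f₁₂ x₁ x₂ * f₁₃ x₁ x₃ * f₂₃ x₂ x₃) /
        ((Fintype.card V₁ : ℝ) * (Fintype.card V₂ : ℝ) * (Fintype.card V₃ : ℝ)) ≤
      supNorm f₁₂ * supNorm f₁₃ * cutNorm f₂₃ :=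
  dense_triangle_counting_general f₁₂ f₁₃ f₂₃ h₁₂ h₁₃
end

section
/- Let V₀, V₁, V₂ be finite nonempty sets and f₀₁ : V₀ × V₁ → [0,∞), f₁₂ : V₁ × V₂ → [0,∞). Then ‖f₀₁ ∘ f₁₂‖₂² ≤ t(K₂,₂, f₀₁)^{1/2} · t(K₂,₂, f₁₂)^{1/2}, where ‖f₀₁ ∘ f₁₂‖₂² = E_{x₀,x₁,x₁',x₂} f₀₁(x₀,x₁) f₀₁(x₀,x₁') f₁₂(x₁,x₂) f₁₂(x₁',x₂) and t(K₂,₂, g) = E_{x,x',y,y'} g(x,y) g(x',y) g(x,y') g(x',y'). -/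
open Finset

private lemma sum4_comm {α β γ δ : Type*} [Fintype α] [Fintype β] [Fintype γ] [Fintype δ]
    (g : α → β → γ → δ → ℝ) :
    ∑ a, ∑ b, ∑ c, ∑ d, g a b c d = ∑ c, ∑ d, ∑ a, ∑ b, g a b c d := by
  calc ∑ a, ∑ b, ∑ c, ∑ d, g a b c d
      = ∑ p : α × β, ∑ q : γ × δ, g p.1 p.2 q.1 q.2 := by
        rw [Fintype.sum_prod_type]
        exact Finset.sum_congr rfl fun a _ => Finset.sum_congr rfl fun b _ =>
          (Fintype.sum_prod_type (fun q : γ × δ => g a b q.1 q.2)).symm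
    _ = ∑ q : γ × δ, ∑ p : α × β, g p.1 p.2 q.1 q.2 := Finset.sum_comm
    _ = ∑ c, ∑ d, ∑ a, ∑ b, g a b c d := by
        rw [Fintype.sum_prod_type]
        exact Finset.sum_congr rfl fun c _ => Finset.sum_congr rfl fun d _ =>
          Fintype.sum_prod_type (fun p : α × β => g p.1 p.2 c d)

/-- `‖f₀₁ ∘ f₁₂‖₂² ≤ t(K₂,₂, f₀₁)^{1/2} · t(K₂,₂, f₁₂)^{1/2}` for nonnegative kernels on
finite sets with uniform measures. -/
theorem comp_L2_sq_le_c4_counts {V₀ V₁ V₂ : Type*} [Fintype V₀] [Fintype V₁] [Fintype V₂]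
    [Nonempty V₀] [Nonempty V₁] [Nonempty V₂]
    (f₀₁ : V₀ → V₁ → ℝ) (f₁₂ : V₁ → V₂ → ℝ)
    (h₀₁ : ∀ x y, 0 ≤ f₀₁ x y) (h₁₂ : ∀ x y, 0 ≤ f₁₂ x y) :
    (∑ x₀, ∑ x₁, ∑ x₁', ∑ x₂, f₀₁ x₀ x₁ * f₀₁ x₀ x₁' * f₁₂ x₁ x₂ * f₁₂ x₁' x₂) /
        ((Fintype.card V₀ : ℝ) * (Fintype.card V₁ : ℝ) * (Fintype.card V₁ : ℝ) *
          (Fintype.card V₂ : ℝ)) ≤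
      Real.sqrt ((∑ x₀, ∑ x₀', ∑ x₁, ∑ x₁',
          f₀₁ x₀ x₁ * f₀₁ x₀' x₁ * f₀₁ x₀ x₁' * f₀₁ x₀' x₁') /
        ((Fintype.card V₀ : ℝ) * (Fintype.card V₀ : ℝ) * (Fintype.card V₁ : ℝ) *
          (Fintype.card V₁ : ℝ))) *
      Real.sqrt ((∑ x₁, ∑ x₁', ∑ x₂, ∑ x₂',
          f₁₂ x₁ x₂ * f₁₂ x₁' x₂ * f₁₂ x₁ x₂' * f₁₂ x₁' x₂') /
        ((Fintype.card V₁ : ℝ) * (Fintype.card V₁ : ℝ) * (Fintype.card V₂ : ℝ) *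
          (Fintype.card V₂ : ℝ))) := by
  set n₀ : ℝ := (Fintype.card V₀ : ℝ) with hn₀
  set n₁ : ℝ := (Fintype.card V₁ : ℝ) with hn₁
  set n₂ : ℝ := (Fintype.card V₂ : ℝ) with hn₂
  have hp₀ : 0 < n₀ := by rw [hn₀]; exact_mod_cast Fintype.card_pos
  have hp₁ : 0 < n₁ := by rw [hn₁]; exact_mod_cast Fintype.card_pos
  have hp₂ : 0 < n₂ := by rw [hn₂]; exact_mod_cast Fintype.card_pos
  set A : V₁ × V₁ → ℝ := fun p => ∑ x₀, f₀₁ x₀ p.1 * f₀₁ x₀ p.2 with hA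
  set B : V₁ × V₁ → ℝ := fun p => ∑ x₂, f₁₂ p.1 x₂ * f₁₂ p.2 x₂ with hB
  have e1 : (∑ x₀, ∑ x₁, ∑ x₁', ∑ x₂, f₀₁ x₀ x₁ * f₀₁ x₀ x₁' * f₁₂ x₁ x₂ * f₁₂ x₁' x₂)
      = ∑ p : V₁ × V₁, A p * B p := by
    rw [Fintype.sum_prod_type]
    rw [Finset.sum_comm]
    refine Finset.sum_congr rfl fun x₁ _ => ?_
    rw [Finset.sum_comm]
    refine Finset.sum_congr rfl fun x₁' _ => ?_
    simp only [hA, hB, Finset.sum_mul_sum]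
    exact Finset.sum_congr rfl fun x₀ _ => Finset.sum_congr rfl fun x₂ _ => by ring
  have e2 : (∑ x₀, ∑ x₀', ∑ x₁, ∑ x₁',
      f₀₁ x₀ x₁ * f₀₁ x₀' x₁ * f₀₁ x₀ x₁' * f₀₁ x₀' x₁') = ∑ p : V₁ × V₁, A p ^ 2 := by
    rw [sum4_comm, Fintype.sum_prod_type]
    refine Finset.sum_congr rfl fun x₁ _ => Finset.sum_congr rfl fun x₁' _ => ?_
    simp only [hA, sq, Finset.sum_mul_sum]
    exact Finset.sum_congr rfl fun x₀ _ => Finset.sum_congr rfl fun x₀' _ => by ring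
  have e3 : (∑ x₁, ∑ x₁', ∑ x₂, ∑ x₂',
      f₁₂ x₁ x₂ * f₁₂ x₁' x₂ * f₁₂ x₁ x₂' * f₁₂ x₁' x₂') = ∑ p : V₁ × V₁, B p ^ 2 := by
    rw [Fintype.sum_prod_type]
    refine Finset.sum_congr rfl fun x₁ _ => Finset.sum_congr rfl fun x₁' _ => ?_
    simp only [hB, sq, Finset.sum_mul_sum]
    exact Finset.sum_congr rfl fun x₂ _ => Finset.sum_congr rfl fun x₂' _ => by ring
  rw [e1, e2, e3]
  have hSA : (0:ℝ) ≤ ∑ p : V₁ × V₁, A p ^ 2 := Finset.sum_nonneg fun p _ => sq_nonneg _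
  have hSB : (0:ℝ) ≤ ∑ p : V₁ × V₁, B p ^ 2 := Finset.sum_nonneg fun p _ => sq_nonneg _
  have hd1 : (n₀ * n₀ * n₁ * n₁ : ℝ) = (n₀ * n₁) ^ 2 := by ring
  have hd2 : (n₁ * n₁ * n₂ * n₂ : ℝ) = (n₁ * n₂) ^ 2 := by ring
  rw [hd1, hd2, Real.sqrt_div hSA, Real.sqrt_div hSB, Real.sqrt_sq (by positivity),
    Real.sqrt_sq (by positivity), div_mul_div_comm]
  have hden : (n₀ * n₁ * (n₁ * n₂) : ℝ) = n₀ * n₁ * n₁ * n₂ := by ring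
  rw [hden]
  gcongr
  exact Real.sum_mul_le_sqrt_mul_sqrt Finset.univ A B
end

section
/- Fix nonzero integers a₁, a₂, a₃, a₄ and let X be a Sidon subset of [n]. Then the number of quadruples (x₁,x₂,x₃,x₄) ∈ X⁴ with a₁x₁ + a₂x₂ + a₃x₃ + a₄x₄ = 0 is O(n), i.e., at most C·n for a constant C depending only on a₁,…,a₄. -/
/-!
Write the equation as `a₁x₁ + a₂x₂ = -a₃x₃ - a₄x₄`. By Cauchy–Schwarz the number of solutions is
at most the mean of the energies `#{a x + b y = a z + b w}` of the two binary forms, and for a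
Sidon set `X` each energy is at most `2|X|²`: when `x ≠ z`, the pair `(x, z)` fixes the nonzero
difference `w - y`, and in a Sidon set a nonzero difference determines `(w, y)`. Finally
`|X|² = O(n)`, since the `|X|² - |X|` nonzero differences of `X ⊆ [n]` are distinct and lie in
`[1 - n, n - 1]`.
-/

open Finset

/-- `X` is a Sidon set: all solutions of `a + b = c + d` in `X` are trivial. -/
def IsSidon (X : Finset ℤ) : Prop :=
  ∀ a ∈ X, ∀ b ∈ X, ∀ c ∈ X, ∀ d ∈ X, a + b = c + d → (a = c ∧ b = d) ∨ (a = d ∧ b = c)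

section Fibres

variable {α β γ : Type*} [DecidableEq γ]

lemma card_filter_eq_eq_sum_mul (s : Finset α) (t : Finset β) (f : α → γ) (g : β → γ)
    {u : Finset γ} (hu : Set.MapsTo f s u) :
    #{p ∈ s ×ˢ t | f p.1 = g p.2} = ∑ c ∈ u, #{x ∈ s | f x = c} * #{y ∈ t | g y = c} := by
  rw [card_eq_sum_card_fiberwise (f := fun p => f p.1) (t := u)
    (fun p hp => hu (mem_product.1 (mem_filter.1 hp).1).1)]
  refine sum_congr rfl fun c _ => ?_
  rw [← card_product, ← filter_product]
  congr 1
  ext ⟨x, y⟩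
  simp only [mem_filter, mem_product]
  constructor
  · rintro ⟨⟨hxy, hfg⟩, rfl⟩
    exact ⟨hxy, rfl, hfg.symm⟩
  · rintro ⟨hxy, hf, hg⟩
    exact ⟨⟨hxy, hf.trans hg.symm⟩, hf⟩

lemma two_mul_card_filter_eq_le (s : Finset α) (t : Finset β) (f : α → γ) (g : β → γ) :
    2 * #{p ∈ s ×ˢ t | f p.1 = g p.2} ≤
      #{p ∈ s ×ˢ s | f p.1 = f p.2} + #{p ∈ t ×ˢ t | g p.1 = g p.2} := by
  set u := s.image f ∪ t.image g
  have hf : Set.MapsTo f s u := fun x hx => mem_union_left _ (mem_image_of_mem f hx)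
  have hg : Set.MapsTo g t u := fun y hy => mem_union_right _ (mem_image_of_mem g hy)
  rw [card_filter_eq_eq_sum_mul s t f g hf, card_filter_eq_eq_sum_mul s s f f hf,
    card_filter_eq_eq_sum_mul t t g g hg, mul_sum, ← sum_add_distrib]
  gcongr with c
  simpa only [mul_assoc, sq] using two_mul_le_add_sq #{x ∈ s | f x = c} #{y ∈ t | g y = c}

end Fibres

namespace IsSidon

variable {X : Finset ℤ}

lemma eq_of_sub_eq (hX : IsSidon X) {x y x' y' : ℤ} (hx : x ∈ X) (hy : y ∈ X) (hx' : x' ∈ X)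
    (hy' : y' ∈ X) (hxy : x ≠ y) (h : x - y = x' - y') : x = x' ∧ y = y' := by
  rcases hX x hx y' hy' x' hx' y hy (by omega) with ⟨hxx', hyy'⟩ | ⟨hxy', -⟩
  · exact ⟨hxx', hyy'.symm⟩
  · exact absurd hxy' hxy

lemma card_sq_le (hX : IsSidon X) {n : ℕ} (hXn : X ⊆ Icc 1 (n : ℤ)) : #X ^ 2 ≤ 3 * n := by
  have hcard : #X ≤ n := by simpa using card_le_card hXn
  have hoff : #X.offDiag ≤ #(Icc (1 - (n : ℤ)) (n - 1)) := by
    refine card_le_card_of_injOn (fun p => p.1 - p.2) ?_ ?_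
    · rintro ⟨x, y⟩ hp
      obtain ⟨hx, hy, -⟩ := mem_offDiag.1 hp
      have := hXn hx
      have := hXn hy
      simp only [coe_Icc, Set.mem_Icc, mem_Icc] at *
      omega
    · rintro ⟨x, y⟩ hp ⟨x', y'⟩ hp' h
      obtain ⟨hx, hy, hxy⟩ := mem_offDiag.1 hp
      obtain ⟨hx', hy', -⟩ := mem_offDiag.1 hp'
      obtain ⟨rfl, rfl⟩ := hX.eq_of_sub_eq hx hy hx' hy' hxy h
      rfl
  rw [offDiag_card, Int.card_Icc] at hoff
  rw [sq]
  omega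

lemma card_linear_energy_le (hX : IsSidon X) {a b : ℤ} (ha : a ≠ 0) (hb : b ≠ 0) :
    #{p ∈ (X ×ˢ X) ×ˢ (X ×ˢ X) | a * p.1.1 + b * p.1.2 = a * p.2.1 + b * p.2.2}
      ≤ 2 * #X ^ 2 := by
  set S := {p ∈ (X ×ˢ X) ×ˢ (X ×ˢ X) | a * p.1.1 + b * p.1.2 = a * p.2.1 + b * p.2.2}
  have hmem : ∀ {x y z w : ℤ}, ((x, y), (z, w)) ∈ S ↔
      (x ∈ X ∧ y ∈ X) ∧ (z ∈ X ∧ w ∈ X) ∧ a * x + b * y = a * z + b * w := by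
    intro x y z w
    simp only [S, mem_filter, mem_product, and_assoc]
  have hdiag : #{p ∈ S | p.1.1 = p.2.1} ≤ #(X ×ˢ X) := by
    refine card_le_card_of_injOn Prod.fst ?_ ?_
    · rintro ⟨⟨x, y⟩, z, w⟩ hp
      exact mem_product.2 (hmem.1 (mem_filter.1 hp).1).1
    · rintro ⟨⟨x, y⟩, z, w⟩ hp ⟨⟨x', y'⟩, z', w'⟩ hp' h
      obtain ⟨hp, rfl : x = z⟩ := mem_filter.1 hp
      obtain ⟨hp', rfl : x' = z'⟩ := mem_filter.1 hp'
      obtain ⟨rfl, rfl⟩ := Prod.mk.inj h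
      have hw := mul_left_cancel₀ hb (by linarith [(hmem.1 hp).2.2] : b * w = b * y)
      have hw' := mul_left_cancel₀ hb (by linarith [(hmem.1 hp').2.2] : b * w' = b * y)
      simp [hw, hw']
  have hoff : #{p ∈ S | ¬p.1.1 = p.2.1} ≤ #(X ×ˢ X) := by
    refine card_le_card_of_injOn (fun p => (p.1.1, p.2.1)) ?_ ?_
    · rintro ⟨⟨x, y⟩, z, w⟩ hp
      obtain ⟨⟨hx, -⟩, ⟨hz, -⟩, -⟩ := hmem.1 (mem_filter.1 hp).1
      exact mem_product.2 ⟨hx, hz⟩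
    · rintro ⟨⟨x, y⟩, z, w⟩ hp ⟨⟨x', y'⟩, z', w'⟩ hp' h
      obtain ⟨hp, hxz : x ≠ z⟩ := mem_filter.1 hp
      obtain ⟨⟨-, hy⟩, ⟨-, hw⟩, he⟩ := hmem.1 hp
      obtain ⟨⟨-, hy'⟩, ⟨-, hw'⟩, he'⟩ := hmem.1 (mem_filter.1 hp').1
      obtain ⟨rfl, rfl⟩ := Prod.mk.inj h
      have hwy : w ≠ y := fun hwy => hxz <| mul_left_cancel₀ ha (by rw [hwy] at he; linarith)
      have hsub : w - y = w' - y' := mul_left_cancel₀ hb (by linear_combination he' - he)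
      obtain ⟨rfl, rfl⟩ := hX.eq_of_sub_eq hw hy hw' hy' hwy hsub
      rfl
  have hsplit := card_filter_add_card_filter_not (s := S) (fun p => p.1.1 = p.2.1)
  rw [card_product, ← sq] at hdiag hoff
  omega

end IsSidon

/-- For fixed nonzero integers `a₁, …, a₄`, every Sidon subset of `[n]` contains at most
`O(n)` solutions to `a₁x₁ + a₂x₂ + a₃x₃ + a₄x₄ = 0`. -/
theorem sidon_linear_solutions_bound (a₁ a₂ a₃ a₄ : ℤ)
    (h₁ : a₁ ≠ 0) (h₂ : a₂ ≠ 0) (h₃ : a₃ ≠ 0) (h₄ : a₄ ≠ 0) :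
    ∃ C : ℝ, 0 < C ∧ ∀ (n : ℕ) (X : Finset ℤ), X ⊆ Finset.Icc 1 (n : ℤ) → IsSidon X →
      (((X ×ˢ X ×ˢ X ×ˢ X).filter
          (fun p : ℤ × ℤ × ℤ × ℤ =>
            a₁ * p.1 + a₂ * p.2.1 + a₃ * p.2.2.1 + a₄ * p.2.2.2 = 0)).card : ℝ) ≤ C * n := by
  refine ⟨6, by norm_num, fun n X hXn hX => ?_⟩
  have hsol : #{p ∈ X ×ˢ X ×ˢ X ×ˢ X | a₁ * p.1 + a₂ * p.2.1 + a₃ * p.2.2.1 + a₄ * p.2.2.2 = 0}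
      = #{p ∈ (X ×ˢ X) ×ˢ (X ×ˢ X) | a₁ * p.1.1 + a₂ * p.1.2 = -a₃ * p.2.1 + -a₄ * p.2.2} := by
    refine card_nbij' (fun p => ((p.1, p.2.1), p.2.2)) (fun q => (q.1.1, q.1.2, q.2)) ?_ ?_
      (fun _ _ => rfl) (fun _ _ => rfl)
    · rintro ⟨x, y, z, w⟩ hp
      simp only [coe_filter, mem_product, Set.mem_ofPred_eq] at hp ⊢
      exact ⟨⟨⟨hp.1.1, hp.1.2.1⟩, hp.1.2.2⟩, by linarith [hp.2]⟩
    · rintro ⟨⟨x, y⟩, z, w⟩ hp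
      simp only [coe_filter, mem_product, Set.mem_ofPred_eq] at hp ⊢
      exact ⟨⟨hp.1.1.1, hp.1.1.2, hp.1.2⟩, by linarith [hp.2]⟩
  have hCS := two_mul_card_filter_eq_le (X ×ˢ X) (X ×ˢ X)
    (fun q => a₁ * q.1 + a₂ * q.2) (fun q => -a₃ * q.1 + -a₄ * q.2)
  have hE₁₂ := hX.card_linear_energy_le h₁ h₂
  have hE₃₄ := hX.card_linear_energy_le (neg_ne_zero.2 h₃) (neg_ne_zero.2 h₄)
  have hsq := hX.card_sq_le hXn
  exact_mod_cast (by omega : _ ≤ 6 * n)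
end

section
/- For every r ≥ 2 and every r-uniform hypergraph H whose girth is greater than e (i.e., H contains no Berge cycle of length at most e), every set of e edges of H spans more than (r−1)e vertices; hence H contains no ((r−1)e, e)-configuration. -/
/-!
Within `e` edges a Berge cycle has length at most `e`, so a set of `e` edges of a hypergraph of
girth greater than `e` is Berge-acyclic. A Berge-acyclic family always has a leaf edge, one
meeting the union of the others in at most one vertex: take the last edge of a maximal Berge
path; a second shared vertex would either extend the path or close a cycle. Removing leaf
edges one at a time shows that `∑ |F| < |⋃ F| + #edges`, i.e. every edge beyond the first
contributes at least `r - 1` new vertices.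
-/

open Finset

/-- A hypergraph with edge set `edges` has a Berge cycle of length `k`: distinct vertices
`v₁, …, v_k` and distinct edges `e₁, …, e_k` with `vᵢ, vᵢ₊₁ ∈ eᵢ` (indices mod `k`). -/
def HasBergeCycle {V : Type*} (edges : Finset (Finset V)) (k : ℕ) : Prop :=
  ∃ (v : ZMod k → V) (f : ZMod k → Finset V),
    Function.Injective v ∧ Function.Injective f ∧
    (∀ i, f i ∈ edges) ∧ (∀ i, v i ∈ f i) ∧ (∀ i, v (i + 1) ∈ f i)

section

variable {V : Type*} {E E' : Finset (Finset V)}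

theorem HasBergeCycle.mono {k : ℕ} (h : HasBergeCycle E k) (hEE' : E ⊆ E') :
    HasBergeCycle E' k :=
  let ⟨v, f, hv, hf, hmem, hleft, hright⟩ := h
  ⟨v, f, hv, hf, fun i => hEE' (hmem i), hleft, hright⟩

theorem HasBergeCycle.le_card {k : ℕ} (h : HasBergeCycle E k) : k ≤ #E := by
  obtain ⟨-, f, -, hf, hmem, -, -⟩ := h
  rcases Nat.eq_zero_or_pos k with rfl | hk
  · exact Nat.zero_le _
  have : NeZero k := ⟨hk.ne'⟩
  simpa using card_le_card_of_injOn f (s := univ) (fun i _ => hmem i) hf.injOn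

theorem hasBergeCycle_of_nat {k : ℕ} (hk : 2 ≤ k) (w : ℕ → V) (g : ℕ → Finset V)
    (hw : Set.InjOn w (Set.Iio k)) (hg : Set.InjOn g (Set.Iio k)) (hmem : ∀ i < k, g i ∈ E)
    (hleft : ∀ i < k, w i ∈ g i) (hright : ∀ i < k, w ((i + 1) % k) ∈ g i) :
    HasBergeCycle E k := by
  have : NeZero k := ⟨by omega⟩
  have : Fact (1 < k) := ⟨by omega⟩
  refine ⟨fun i => w i.val, fun i => g i.val,
    fun i j h => ZMod.val_injective k (hw i.val_lt j.val_lt h),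
    fun i j h => ZMod.val_injective k (hg i.val_lt j.val_lt h),
    fun i => hmem _ i.val_lt, fun i => hleft _ i.val_lt, fun i => ?_⟩
  have hsucc : (i + 1).val = (i.val + 1) % k := by rw [ZMod.val_add, ZMod.val_one]
  simpa only [hsucc] using hright _ i.val_lt

/-- `f 0, v 0, f 1, …, v (n - 1), f n` is a Berge path in `E`. -/
structure IsBergePath (E : Finset (Finset V)) (n : ℕ) (f : ℕ → Finset V) (v : ℕ → V) :
    Prop where
  mem_edges : ∀ i ≤ n, f i ∈ E
  injOn_edge : Set.InjOn f (Set.Iic n)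
  injOn_vertex : Set.InjOn v (Set.Iio n)
  mem_left : ∀ i < n, v i ∈ f i
  mem_right : ∀ i < n, v i ∈ f (i + 1)

namespace IsBergePath

variable {n : ℕ} {f : ℕ → Finset V} {v : ℕ → V}

theorem succ_le_card (hp : IsBergePath E n f v) : n + 1 ≤ #E := by
  simpa using card_le_card_of_injOn f (s := range (n + 1))
    (fun i hi => hp.mem_edges i (Nat.lt_succ_iff.1 (mem_range.1 hi)))
    (hp.injOn_edge.mono fun i hi => Nat.lt_succ_iff.1 (mem_range.1 hi))

theorem drop (hp : IsBergePath E n f v) {j : ℕ} (hj : j ≤ n) :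
    IsBergePath E (n - j) (fun i => f (j + i)) (fun i => v (j + i)) where
  mem_edges i hi := hp.mem_edges _ (by omega)
  injOn_edge a (ha : a ≤ n - j) b (hb : b ≤ n - j) h := by
    have := hp.injOn_edge (show j + a ≤ n by omega) (show j + b ≤ n by omega) h
    omega
  injOn_vertex a (ha : a < n - j) b (hb : b < n - j) h := by
    have := hp.injOn_vertex (show j + a < n by omega) (show j + b < n by omega) h
    omega
  mem_left i hi := hp.mem_left (j + i) (by omega)
  mem_right i hi := hp.mem_right (j + i) (by omega)

theorem snoc [DecidableEq V] (hp : IsBergePath E n f v) {g : Finset V} {u : V} (hg : g ∈ E)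
    (hgf : ∀ i ≤ n, f i ≠ g) (hu : u ∈ f n) (hug : u ∈ g) (hnew : ∀ i < n, v i ≠ u) :
    IsBergePath E (n + 1) (Function.update f (n + 1) g) (Function.update v n u) where
  mem_edges i hi := by
    rcases hi.lt_or_eq with hi | rfl
    · rw [Function.update_of_ne hi.ne]
      exact hp.mem_edges i (by omega)
    · rwa [Function.update_self]
  injOn_edge a (ha : a ≤ n + 1) b (hb : b ≤ n + 1) h := by
    simp only [Function.update_apply] at h
    split_ifs at h with ha' hb' hb'
    · omega
    · exact absurd h.symm (hgf b (by omega))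
    · exact absurd h (hgf a (by omega))
    · exact hp.injOn_edge (show a ≤ n by omega) (show b ≤ n by omega) h
  injOn_vertex a (ha : a < n + 1) b (hb : b < n + 1) h := by
    simp only [Function.update_apply] at h
    split_ifs at h with ha' hb' hb'
    · omega
    · exact absurd h.symm (hnew b (by omega))
    · exact absurd h (hnew a (by omega))
    · exact hp.injOn_vertex (show a < n by omega) (show b < n by omega) h
  mem_left i hi := by
    rw [Function.update_of_ne (show i ≠ n + 1 by omega)]
    rcases (Nat.lt_succ_iff.1 hi).lt_or_eq with hi | rfl
    · rw [Function.update_of_ne hi.ne]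
      exact hp.mem_left i hi
    · rwa [Function.update_self]
  mem_right i hi := by
    rcases (Nat.lt_succ_iff.1 hi).lt_or_eq with hi | rfl
    · rw [Function.update_of_ne hi.ne, Function.update_of_ne (show i + 1 ≠ n + 1 by omega)]
      exact hp.mem_right i hi
    · rwa [Function.update_self, Function.update_self]

theorem hasBergeCycle_of_mem (hp : IsBergePath E n f v) (hn : 1 ≤ n) {u : V} (hu0 : u ∈ f 0)
    (hun : u ∈ f n) (hnew : ∀ i < n, v i ≠ u) : HasBergeCycle E (n + 1) := by
  refine hasBergeCycle_of_nat (by omega) (fun | 0 => u | i + 1 => v i) f ?_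
    (hp.injOn_edge.mono fun i (hi : i < n + 1) => show i ≤ n by omega)
    (fun i hi => hp.mem_edges i (by omega)) ?_ ?_
  · rintro (_ | a) (ha : _ < n + 1) (_ | b) (hb : _ < n + 1) h
    · rfl
    · exact absurd h.symm (hnew b (by omega))
    · exact absurd h (hnew a (by omega))
    · exact congrArg (· + 1) (hp.injOn_vertex (show a < n by omega) (show b < n by omega) h)
  · rintro (_ | i) hi
    · exact hu0
    · exact hp.mem_right i (by omega)
  · intro i hi
    rcases Nat.lt_succ_iff_lt_or_eq.1 hi with hi | rfl
    · rw [Nat.mod_eq_of_lt (by omega)]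
      exact hp.mem_left i hi
    · rwa [Nat.mod_self]

theorem hasBergeCycle_of_vertex_mem_last (hp : IsBergePath E n f v) {i : ℕ} (hi : i + 1 < n)
    (hvi : v i ∈ f n) : HasBergeCycle E (n - i) := by
  have hlen : n - (i + 1) + 1 = n - i := by omega
  rw [← hlen]
  refine (hp.drop (j := i + 1) (by omega)).hasBergeCycle_of_mem (by omega)
    (hp.mem_right i (by omega)) (by rwa [show i + 1 + (n - (i + 1)) = n by omega]) ?_
  intro j hj h
  have := hp.injOn_vertex (show i + 1 + j < n by omega) (show i < n by omega) h
  omega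

theorem exists_hasBergeCycle_of_mem_last [DecidableEq V] (hp : IsBergePath E n f v)
    (hmax : ∀ f' v', ¬IsBergePath E (n + 1) f' v') {g : Finset V} {u : V} (hg : g ∈ E)
    (hgn : g ≠ f n) (hu : u ∈ f n) (hug : u ∈ g) (hnew : ∀ i < n, v i ≠ u) :
    ∃ k, 2 ≤ k ∧ HasBergeCycle E k := by
  by_cases hgf : ∃ j ≤ n, f j = g
  · obtain ⟨j, hj, rfl⟩ := hgf
    have hjn : j < n := hj.lt_of_ne fun h => hgn (h ▸ rfl)
    refine ⟨n - j + 1, by omega, (hp.drop hj).hasBergeCycle_of_mem (by omega) (by simpa)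
      (by rwa [show j + (n - j) = n by omega]) fun i hi => hnew _ (by omega)⟩
  · push Not at hgf
    exact (hmax _ _ (hp.snoc hg hgf hu hug hnew)).elim

end IsBergePath

theorem exists_maximal_isBergePath [Nonempty V] (hE : E.Nonempty) :
    ∃ n f v, IsBergePath E n f v ∧ ∀ f' v', ¬IsBergePath E (n + 1) f' v' := by
  by_contra! h
  obtain ⟨F, hF⟩ := hE
  have hpath : ∀ n, ∃ f v, IsBergePath E n f v := by
    intro n
    induction n with
    | zero =>
      exact ⟨fun _ => F, fun _ => Classical.arbitrary V,
        ⟨fun _ _ => hF, fun a (ha : a ≤ 0) b (hb : b ≤ 0) _ => by omega,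
          fun a (ha : a < 0) => by omega, by simp, by simp⟩⟩
    | succ n ih =>
      obtain ⟨f, v, hp⟩ := ih
      exact h n f v hp
  obtain ⟨f, v, hp⟩ := hpath #E
  exact absurd hp.succ_le_card (by omega)

def IsBergeAcyclic (E : Finset (Finset V)) : Prop :=
  ∀ k, 2 ≤ k → ¬HasBergeCycle E k

namespace IsBergeAcyclic

theorem mono (hE' : IsBergeAcyclic E') (hEE' : E ⊆ E') : IsBergeAcyclic E :=
  fun k hk hcyc => hE' k hk (hcyc.mono hEE')

variable [DecidableEq V]

theorem exists_card_inter_biUnion_erase_le_one (hE : IsBergeAcyclic E) (hne : E.Nonempty) :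
    ∃ F ∈ E, #(F ∩ (E.erase F).biUnion id) ≤ 1 := by
  by_contra! h
  obtain ⟨F₀, hF₀⟩ := hne
  have : Nonempty V := by
    obtain ⟨x, -⟩ := card_pos.1 (zero_lt_one.trans (h F₀ hF₀))
    exact ⟨x⟩
  obtain ⟨n, f, v, hp, hmax⟩ := exists_maximal_isBergePath ⟨F₀, hF₀⟩
  obtain ⟨a, ha, b, hb, hab⟩ := one_lt_card.1 (h (f n) (hp.mem_edges n le_rfl))
  -- A shared vertex other than `v (n - 1)` either closes a cycle or extends the path.
  obtain ⟨u, hu, hun⟩ : ∃ u ∈ f n ∩ (E.erase (f n)).biUnion id, u ≠ v (n - 1) := by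
    by_cases hav : a = v (n - 1)
    · exact ⟨b, hb, hav ▸ hab.symm⟩
    · exact ⟨a, ha, hav⟩
  obtain ⟨huf, g, hg, hug⟩ : u ∈ f n ∧ ∃ g ∈ E.erase (f n), u ∈ g := by
    simpa only [mem_inter, mem_biUnion, id] using hu
  by_cases hold : ∃ i < n, v i = u
  · obtain ⟨i, hi, rfl⟩ := hold
    have hi' : i + 1 < n := by
      by_contra
      exact hun (by rw [show i = n - 1 by omega])
    exact hE (n - i) (by omega) (hp.hasBergeCycle_of_vertex_mem_last hi' huf)
  · push Not at hold
    obtain ⟨k, hk, hcyc⟩ := hp.exists_hasBergeCycle_of_mem_last hmax (mem_of_mem_erase hg)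
      (ne_of_mem_erase hg) huf hug hold
    exact hE k hk hcyc

theorem sum_card_lt_card_biUnion_add_card (hE : IsBergeAcyclic E) (hne : E.Nonempty) :
    ∑ F ∈ E, #F < #(E.biUnion id) + #E := by
  induction hne using Finset.Nonempty.strong_induction with
  | h₀ F => simp
  | @h₁ E hnt ih =>
    obtain ⟨F, hF, hleaf⟩ := hE.exists_card_inter_biUnion_erase_le_one hnt.nonempty
    have hrest := ih (E.erase F) hnt.erase_nonempty (erase_ssubset hF)
      (hE.mono (erase_subset F E))
    set U := (E.erase F).biUnion id
    have hunion : E.biUnion id = F ∪ U := by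
      rw [← insert_erase hF, biUnion_insert]
      rfl
    have hincl := card_union_add_card_inter F U
    rw [← add_sum_erase E _ hF, hunion, ← card_erase_add_one hF]
    omega

end IsBergeAcyclic

end

/-- In an `r`-uniform hypergraph of girth greater than `e`, every set of `e` edges spans
more than `(r−1)e` vertices; i.e., there is no `((r−1)e, e)`-configuration. -/
theorem girth_gt_no_configuration {V : Type*} [DecidableEq V] (r e : ℕ)
    (hr : 2 ≤ r) (he : 1 ≤ e) (edges : Finset (Finset V))
    (huniform : ∀ E ∈ edges, E.card = r)
    (hgirth : ∀ k, 2 ≤ k → k ≤ e → ¬ HasBergeCycle edges k) :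
    ∀ E' ⊆ edges, E'.card = e → (r - 1) * e < (E'.biUnion id).card := by
  intro E' hsub hcard
  have hacyclic : IsBergeAcyclic E' := fun k hk hcyc =>
    hgirth k hk (hcard ▸ hcyc.le_card) (hcyc.mono hsub)
  have hsum : ∑ F ∈ E', #F = r * e := by
    rw [sum_congr rfl fun F hF => huniform F (hsub hF), sum_const, smul_eq_mul, hcard, mul_comm]
  have hcount := hacyclic.sum_card_lt_card_biUnion_add_card (card_pos.1 (by omega))
  rw [hsum, hcard] at hcount
  have hle : e ≤ r * e := Nat.le_mul_of_pos_left e (by omega)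
  rw [Nat.sub_one_mul]
  omega
end

section
/- For every r ≥ 2 and g ≥ 2 there exists n₀ such that for all n ≥ n₀ there is an r-uniform hypergraph on n vertices with girth greater than g and more than n/(r−1) edges. -/
open Finset

namespace HGirth


abbrev Idx (s L : ℕ) := Fin s × Fin 3 × Fin L

variable (r L s : ℕ)

abbrev V1 := Bool ⊕ (Fin 3 × Fin (L - 1)) ⊕ (Fin 3 × Fin L × Fin (r - 2))

abbrev Vt := Fin s × V1 r L

instance : DecidableEq (Vt r L s) := instDecidableEqProd

def P (c : Fin s) (j : Fin 3) (t : ℕ) : Vt r L s :=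
  if h0 : t = 0 then (c, Sum.inl false)
  else if hL : L ≤ t then (c, Sum.inl true)
  else (c, Sum.inr (Sum.inl (j, ⟨t - 1, by omega⟩)))

def Fl (c : Fin s) (j : Fin 3) (tf : Fin L) (x : Fin (r - 2)) : Vt r L s :=
  (c, Sum.inr (Sum.inr (j, tf, x)))

def hgt : Vt r L s → ℕ
  | (_, Sum.inl false) => 0
  | (_, Sum.inl true) => L
  | (_, Sum.inr (Sum.inl (_, t))) => t.1 + 1
  | (_, Sum.inr (Sum.inr _)) => 0

lemma hgt_P (c : Fin s) (j : Fin 3) (t : ℕ) (ht : t ≤ L) :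
    hgt r L s (P r L s c j t) = t := by
  unfold P
  split_ifs with h0 hL
  · simp [hgt, h0]
  · have : t = L := by omega
    simp [hgt, this]
  · simp [hgt]; omega

lemma P_inj {c c' : Fin s} {j j' : Fin 3} {t t' : ℕ} (ht : t ≤ L) (ht' : t' ≤ L)
    (h : P r L s c j t = P r L s c' j' t') :
    c = c' ∧ t = t' ∧ (t ≠ 0 → t ≠ L → j = j') := by
  unfold P at h
  split_ifs at h <;> simp_all [Prod.ext_iff] <;> omega

lemma P_ne_Fl (c c' : Fin s) (j j' : Fin 3) (t : ℕ) (tf : Fin L) (x : Fin (r - 2)) :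
    P r L s c j t ≠ Fl r L s c' j' tf x := by
  unfold P Fl
  split_ifs <;> simp



def E (a : Idx s L) : Finset (Vt r L s) :=
  insert (P r L s a.1 a.2.1 a.2.2) (insert (P r L s a.1 a.2.1 (a.2.2 + 1))
    ((Finset.univ : Finset (Fin (r - 2))).image (Fl r L s a.1 a.2.1 a.2.2)))

lemma mem_E {x : Vt r L s} {a : Idx s L} :
    x ∈ E r L s a ↔ x = P r L s a.1 a.2.1 a.2.2 ∨ x = P r L s a.1 a.2.1 (a.2.2 + 1) ∨
      ∃ y, x = Fl r L s a.1 a.2.1 a.2.2 y := by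
  simp [E, eq_comm]

lemma Fl_mem_E {c : Fin s} {j : Fin 3} {tf : Fin L} {x : Fin (r - 2)} {a : Idx s L}
    (h : Fl r L s c j tf x ∈ E r L s a) : a.1 = c ∧ a.2.1 = j ∧ a.2.2 = tf := by
  rw [mem_E] at h
  rcases h with h | h | ⟨y, h⟩
  · exact absurd h.symm (P_ne_Fl r L s _ _ _ _ _ _ _)
  · exact absurd h.symm (P_ne_Fl r L s _ _ _ _ _ _ _)
  · unfold Fl at h
    simp [Prod.ext_iff] at h
    tauto

lemma card_E (hr : 2 ≤ r) (a : Idx s L) : (E r L s a).card = r := by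
  have hlt : (a.2.2 : ℕ) < L := a.2.2.2
  have h1 : P r L s a.1 a.2.1 a.2.2 ≠ P r L s a.1 a.2.1 (a.2.2 + 1) := by
    intro h
    have := congrArg (hgt r L s) h
    rw [hgt_P r L s _ _ _ (by omega), hgt_P r L s _ _ _ (by omega)] at this
    omega
  have h2 : ∀ t : ℕ, P r L s a.1 a.2.1 t ∉
      (Finset.univ : Finset (Fin (r - 2))).image (Fl r L s a.1 a.2.1 a.2.2) := by
    intro t h
    simp only [Finset.mem_image] at h
    obtain ⟨y, -, hy⟩ := h
    exact P_ne_Fl r L s _ _ _ _ _ _ _ hy.symm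
  have hFl : Function.Injective (Fl r L s a.1 a.2.1 a.2.2) := by
    intro x y h
    simpa [Fl, Prod.ext_iff] using h
  rw [E, Finset.card_insert_of_notMem, Finset.card_insert_of_notMem (h2 _),
    Finset.card_image_of_injective _ hFl, Finset.card_univ, Fintype.card_fin]
  · omega
  · simp only [Finset.mem_insert]
    push_neg
    exact ⟨h1, h2 _⟩


lemma P_mem_E {c : Fin s} {j : Fin 3} {t : ℕ} {a : Idx s L} (ht : t ≤ L)
    (h : P r L s c j t ∈ E r L s a) :
    c = a.1 ∧ (t = a.2.2 ∨ t = (a.2.2 : ℕ) + 1) ∧ (t ≠ 0 → t ≠ L → j = a.2.1) := by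
  have hlt : (a.2.2 : ℕ) < L := a.2.2.2
  rw [mem_E] at h
  rcases h with h | h | ⟨y, h⟩
  · obtain ⟨h1, h2, h3⟩ := P_inj r L s ht (by omega) h
    exact ⟨h1, Or.inl h2, h3⟩
  · obtain ⟨h1, h2, h3⟩ := P_inj r L s ht (by omega) h
    exact ⟨h1, Or.inr h2, h3⟩
  · exact absurd h (P_ne_Fl r L s _ _ _ _ _ _ _)

lemma E_inj (hL : 2 ≤ L) : Function.Injective (E r L s) := by
  intro a b h
  have hlt : (a.2.2 : ℕ) < L := a.2.2.2
  have hblt : (b.2.2 : ℕ) < L := b.2.2.2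
  have m1 : P r L s a.1 a.2.1 a.2.2 ∈ E r L s b := by
    rw [← h, mem_E]; left; rfl
  have m2 : P r L s a.1 a.2.1 ((a.2.2 : ℕ) + 1) ∈ E r L s b := by
    rw [← h, mem_E]; right; left; rfl
  obtain ⟨hc1, ht1, -⟩ := P_mem_E r L s (by omega) m1
  obtain ⟨-, ht2, -⟩ := P_mem_E r L s (by omega) m2
  have htf : (a.2.2 : ℕ) = (b.2.2 : ℕ) := by omega
  -- now the path component, via a non-hub end
  have hstar : ∃ tstar : ℕ, 1 ≤ tstar ∧ tstar < L ∧
      (tstar = (a.2.2 : ℕ) ∨ tstar = (a.2.2 : ℕ) + 1) := by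
    by_cases h0 : (a.2.2 : ℕ) = 0
    · exact ⟨1, le_refl 1, by omega, by omega⟩
    · exact ⟨a.2.2, by omega, hlt, Or.inl rfl⟩
  obtain ⟨tstar, hts1, hts2, hts3⟩ := hstar
  have m3 : P r L s a.1 a.2.1 tstar ∈ E r L s b := by
    rw [← h, mem_E]
    rcases hts3 with h' | h'
    · left; rw [h']
    · right; left; rw [h']
  obtain ⟨-, -, hj⟩ := P_mem_E r L s (by omega) m3
  have hj' := hj (by omega) (by omega)
  obtain ⟨a1, a2, a3⟩ := a
  obtain ⟨b1, b2, b3⟩ := b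
  simp only [Prod.mk.injEq]
  exact ⟨hc1, hj', Fin.ext htf⟩


lemma no_short_cycle (hL : 2 ≤ L) {k : ℕ} (hk2 : 2 ≤ k) (hkL : k ≤ L) :
    ¬ HasBergeCycle (Finset.univ.image (E r L s)) k := by
  haveI : NeZero k := ⟨by omega⟩
  rintro ⟨v, f, hv, hf, hfe, hvf, hvf'⟩
  have hidx : ∀ i : ZMod k, ∃ a : Idx s L, f i = E r L s a := by
    intro i
    have := hfe i
    simp only [Finset.mem_image] at this
    obtain ⟨a, -, ha⟩ := this
    exact ⟨a, ha.symm⟩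
  choose idx hidxE using hidx
  have hone : (1 : ZMod k) ≠ 0 := by
    intro h
    have h1 : ((1 : ℕ) : ZMod k) = 0 := by exact_mod_cast h
    rw [ZMod.natCast_eq_zero_iff] at h1
    have := Nat.le_of_dvd one_pos h1
    omega
  have hsucc_ne : ∀ i : ZMod k, i ≠ i + 1 := by
    intro i h
    exact hone (left_eq_add.mp h)
  have hsub_add : ∀ i : ZMod k, i - 1 + 1 = i := fun i => by ring
  -- any vertex lying in two distinct edges is an "end" (a P-vertex) of each
  have hend : ∀ i i' : ZMod k, i ≠ i' → ∀ x, x ∈ f i → x ∈ f i' →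
      x = P r L s (idx i).1 (idx i).2.1 (idx i).2.2 ∨
      x = P r L s (idx i).1 (idx i).2.1 ((idx i).2.2 + 1) := by
    intro i i' hne x hx hx'
    rw [hidxE i, mem_E] at hx
    rcases hx with hh | hh | ⟨y, hh⟩
    · exact Or.inl hh
    · exact Or.inr hh
    · exfalso
      rw [hidxE i'] at hx'
      rw [hh] at hx'
      obtain ⟨e1, e2, e3⟩ := Fl_mem_E r L s hx'
      have : idx i' = idx i := Prod.ext_iff.mpr ⟨e1, Prod.ext_iff.mpr ⟨e2, e3⟩⟩
      have : f i = f i' := by rw [hidxE i, hidxE i', this]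
      exact hne (hf this)
  have endi : ∀ i : ZMod k, v i = P r L s (idx i).1 (idx i).2.1 (idx i).2.2 ∨
      v i = P r L s (idx i).1 (idx i).2.1 ((idx i).2.2 + 1) := by
    intro i
    refine hend i (i - 1) ?_ (v i) (hvf i) ?_
    · intro hh
      have := hsucc_ne (i - 1)
      rw [hsub_add i] at this
      exact this hh.symm
    · have := hvf' (i - 1)
      rwa [hsub_add i] at this
  have endi' : ∀ i : ZMod k, v (i + 1) = P r L s (idx i).1 (idx i).2.1 (idx i).2.2 ∨
      v (i + 1) = P r L s (idx i).1 (idx i).2.1 ((idx i).2.2 + 1) := by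
    intro i
    exact hend i (i + 1) (hsucc_ne i) (v (i + 1)) (hvf' i) (hvf (i + 1))
  set t : ZMod k → ℕ := fun i => hgt r L s (v i) with htdef
  have master : ∀ i : ZMod k, ∃ c j, v i = P r L s c j (t i) ∧ v (i + 1) = P r L s c j (t (i + 1)) ∧
      (t (i + 1) = t i + 1 ∨ t i = t (i + 1) + 1) ∧ t i ≤ L ∧ t (i + 1) ≤ L := by
    intro i
    have hlt : ((idx i).2.2 : ℕ) < L := (idx i).2.2.2
    have hne : v i ≠ v (i + 1) := fun hh => hsucc_ne i (hv hh)
    rcases endi i with h1 | h1 <;> rcases endi' i with h2 | h2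
    · exact absurd (h1.trans h2.symm) hne
    · have e1 : t i = ((idx i).2.2 : ℕ) := by rw [htdef]; simp only []; rw [h1, hgt_P r L s _ _ _ (by omega)]
      have e2 : t (i + 1) = ((idx i).2.2 : ℕ) + 1 := by rw [htdef]; simp only []; rw [h2, hgt_P r L s _ _ _ (by omega)]
      exact ⟨(idx i).1, (idx i).2.1, by rw [e1]; exact h1, by rw [e2]; exact h2,
        by omega, by omega, by omega⟩
    · have e1 : t i = ((idx i).2.2 : ℕ) + 1 := by rw [htdef]; simp only []; rw [h1, hgt_P r L s _ _ _ (by omega)]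
      have e2 : t (i + 1) = ((idx i).2.2 : ℕ) := by rw [htdef]; simp only []; rw [h2, hgt_P r L s _ _ _ (by omega)]
      exact ⟨(idx i).1, (idx i).2.1, by rw [e1]; exact h1, by rw [e2]; exact h2,
        by omega, by omega, by omega⟩
    · exact absurd (h1.trans h2.symm) hne
  have hstep : ∀ i : ZMod k, (t (i + 1) = t i + 1 ∨ t i = t (i + 1) + 1) ∧ t i ≤ L ∧ t (i + 1) ≤ L := by
    intro i
    obtain ⟨c, j, -, -, h3, h4, h5⟩ := master i
    exact ⟨h3, h4, h5⟩
  -- distance lemma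
  have hdist : ∀ (i : ZMod k) (d : ℕ), t (i + (d : ZMod k)) ≤ t i + d ∧ t i ≤ t (i + (d : ZMod k)) + d := by
    intro i d
    induction d with
    | zero => simp
    | succ d ih =>
      have hs := hstep (i + (d : ZMod k))
      have hc : (((d + 1 : ℕ)) : ZMod k) = ((d : ℕ) : ZMod k) + 1 := by push_cast; ring
      rw [hc, ← add_assoc]
      omega
  by_cases hk3 : 3 ≤ k
  -- main case: k ≥ 3
  · have htwo : (2 : ZMod k) ≠ 0 := by
      intro h
      have h1 : ((2 : ℕ) : ZMod k) = 0 := by exact_mod_cast h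
      rw [ZMod.natCast_eq_zero_iff] at h1
      have := Nat.le_of_dvd two_pos h1
      omega
    have hS : ∀ i : ZMod k, 1 ≤ t i → t i < L → t (i - 1) = t (i + 1) → False := by
      intro i h1 h2 h3
      obtain ⟨c, j, m1, m2, -, -, -⟩ := master i
      obtain ⟨c', j', n1, n2, -, -, -⟩ := master (i - 1)
      rw [hsub_add i] at n2
      obtain ⟨ec, -, ej⟩ := P_inj r L s (by omega) (by omega) (n2.symm.trans m1)
      have hj : j' = j := ej (by omega) (by omega)
      have : v (i - 1) = v (i + 1) := by
        rw [n1, m2, ec, hj, h3]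
      have h4 : i - 1 = i + 1 := hv this
      apply htwo
      linear_combination -h4
    obtain ⟨i₀, -, hmax⟩ := Finset.exists_max_image Finset.univ t ⟨0, Finset.mem_univ 0⟩
    have hmax' : ∀ i, t i ≤ t i₀ := fun i => hmax i (Finset.mem_univ i)
    by_cases hT0 : t i₀ = 0
    · have h1 := hstep i₀
      have h2 := hmax' (i₀ + 1)
      omega
    · by_cases hTL : t i₀ < L
      · -- interior maximum
        apply hS i₀ (by omega) hTL
        have h1 := hstep i₀
        have h2 := hmax' (i₀ + 1)
        have h3 := hstep (i₀ - 1)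
        rw [hsub_add i₀] at h3
        have h4 := hmax' (i₀ - 1)
        omega
      · -- t i₀ = L ; look at minimum
        have hTL' : t i₀ = L := by have := (hstep i₀).2.1; omega
        obtain ⟨i₁, -, hmin⟩ := Finset.exists_min_image Finset.univ t ⟨0, Finset.mem_univ 0⟩
        have hmin' : ∀ i, t i₁ ≤ t i := fun i => hmin i (Finset.mem_univ i)
        by_cases hm0 : 1 ≤ t i₁
        · by_cases hmL : t i₁ < L
          · -- interior minimum
            apply hS i₁ hm0 hmL
            have h1 := hstep i₁
            have h2 := hmin' (i₁ + 1)
            have h3 := hstep (i₁ - 1)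
            rw [hsub_add i₁] at h3
            have h4 := hmin' (i₁ - 1)
            omega
          · have h1 := hstep i₁
            have h2 := hmin' (i₁ + 1)
            have h3 := (hstep i₁).2.2
            omega
        · -- t i₁ = 0 and t i₀ = L : distance argument
          have hm0' : t i₁ = 0 := by omega
          have hne01 : i₀ - i₁ ≠ 0 := by
            intro h
            have : i₀ = i₁ := by linear_combination h
            rw [this] at hTL'
            omega
          set d : ℕ := (i₀ - i₁).val with hd
          set d' : ℕ := (i₁ - i₀).val with hd'
          have hdk : d < k := ZMod.val_lt _
          have hdk' : d' < k := ZMod.val_lt _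
          have hcast : ((d : ℕ) : ZMod k) = i₀ - i₁ := ZMod.natCast_rightInverse _
          have hcast' : ((d' : ℕ) : ZMod k) = i₁ - i₀ := ZMod.natCast_rightInverse _
          have h1 : t (i₁ + (d : ZMod k)) ≤ t i₁ + d := (hdist i₁ d).1
          rw [hcast] at h1
          have he : i₁ + (i₀ - i₁) = i₀ := by ring
          rw [he] at h1
          have h2 : t i₀ ≤ t (i₀ + (d' : ZMod k)) + d' := (hdist i₀ d').2
          rw [hcast'] at h2
          have he' : i₀ + (i₁ - i₀) = i₁ := by ring
          rw [he'] at h2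
          -- d + d' = k
          have hsum : ((d + d' : ℕ) : ZMod k) = 0 := by
            push_cast
            rw [hcast, hcast']
            ring
          rw [ZMod.natCast_eq_zero_iff] at hsum
          have hdd : d + d' = k := by
            have hkle : k ≤ d + d' := Nat.le_of_dvd (by omega) hsum
            have hdvd2 : k ∣ (d + d' - k) := Nat.dvd_sub hsum dvd_rfl
            have := Nat.eq_zero_of_dvd_of_lt hdvd2 (by omega)
            omega
          omega
  -- k = 2
  · have hk2' : k = 2 := by omega
    have h2z : (2 : ZMod k) = 0 := by
      have h22 : ((2 : ℕ) : ZMod k) = 0 := by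
        rw [ZMod.natCast_eq_zero_iff, hk2']
      exact_mod_cast h22
    have hex : ∃ i : ZMod k, 1 ≤ t i ∧ t i < L := by
      have h0 := hstep 0
      rw [zero_add] at h0
      by_cases h : 1 ≤ t 0 ∧ t 0 < L
      · exact ⟨0, h⟩
      · exact ⟨1, by omega⟩
    obtain ⟨i, hi1, hi2⟩ := hex
    obtain ⟨c, j, m1, m2, mrel, mb1, mb2⟩ := master i
    have hii : i + 1 + 1 = i := by
      have h11 : (1 : ZMod k) + 1 = 2 := by norm_num
      rw [add_assoc, h11, h2z, add_zero]
    have key : ∀ a : Idx s L,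
        (v i = P r L s a.1 a.2.1 a.2.2 ∨ v i = P r L s a.1 a.2.1 ((a.2.2 : ℕ) + 1)) →
        (v (i + 1) = P r L s a.1 a.2.1 a.2.2 ∨ v (i + 1) = P r L s a.1 a.2.1 ((a.2.2 : ℕ) + 1)) →
        a.1 = c ∧ a.2.1 = j ∧ ((a.2.2 : ℕ) = t i ∨ (a.2.2 : ℕ) + 1 = t i) ∧
          ((a.2.2 : ℕ) = t (i + 1) ∨ (a.2.2 : ℕ) + 1 = t (i + 1)) := by
      intro a ha hb
      have hlt : (a.2.2 : ℕ) < L := a.2.2.2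
      have hfirst : a.1 = c ∧ a.2.1 = j ∧ ((a.2.2 : ℕ) = t i ∨ (a.2.2 : ℕ) + 1 = t i) := by
        rcases ha with ha | ha
        · obtain ⟨e1, e2, e3⟩ := P_inj r L s (by omega) (by omega) (ha.symm.trans m1)
          exact ⟨e1, e3 (by omega) (by omega), Or.inl e2⟩
        · obtain ⟨e1, e2, e3⟩ := P_inj r L s (by omega) (by omega) (ha.symm.trans m1)
          exact ⟨e1, e3 (by omega) (by omega), Or.inr e2⟩
      have hsecond : ((a.2.2 : ℕ) = t (i + 1) ∨ (a.2.2 : ℕ) + 1 = t (i + 1)) := by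
        rcases hb with hb | hb
        · obtain ⟨-, e2, -⟩ := P_inj r L s (by omega) (by omega) (hb.symm.trans m2)
          exact Or.inl e2
        · obtain ⟨-, e2, -⟩ := P_inj r L s (by omega) (by omega) (hb.symm.trans m2)
          exact Or.inr e2
      exact ⟨hfirst.1, hfirst.2.1, hfirst.2.2, hsecond⟩
    obtain ⟨k1, k2, k3, k4⟩ := key (idx i) (endi i) (endi' i)
    obtain ⟨l1, l2, l3, l4⟩ := key (idx (i + 1))
      (by have := endi' (i + 1); rwa [hii] at this) (endi (i + 1))
    have htf : ((idx i).2.2 : ℕ) = ((idx (i + 1)).2.2 : ℕ) := by omega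
    have hidxeq : idx i = idx (i + 1) :=
      Prod.ext_iff.mpr ⟨k1.trans l1.symm,
        Prod.ext_iff.mpr ⟨k2.trans l2.symm, Fin.ext htf⟩⟩
    have : f i = f (i + 1) := by rw [hidxE, hidxE, hidxeq]
    exact hsucc_ne i (hf this)

lemma card_edges (hL : 2 ≤ L) : (Finset.univ.image (E r L s)).card = s * (3 * L) := by
  rw [Finset.card_image_of_injective _ (E_inj r L s hL), Finset.card_univ]
  simp [Idx, mul_comm, mul_assoc, mul_left_comm]

lemma card_Vt : Fintype.card (Vt r L s) = s * (2 + (3 * (L - 1) + 3 * (L * (r - 2)))) := by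
  simp [Vt, V1]

lemma transfer {W U : Type*} [DecidableEq W] [DecidableEq U] [Nonempty W]
    (ι : W → U) (hι : Function.Injective ι) (edges : Finset (Finset W)) (k : ℕ)
    (h : ¬ HasBergeCycle edges k) : ¬ HasBergeCycle (edges.image (Finset.image ι)) k := by
  rintro ⟨v, f, hv, hf, hfe, hvf, hvf'⟩
  apply h
  have hex : ∀ i, ∃ g ∈ edges, g.image ι = f i := by
    intro i
    have := hfe i
    simpa using this
  choose g hg hgf using hex
  have hpre : ∀ (i x : ZMod k), v i ∈ f x →
      Function.invFun ι (v i) ∈ g x ∧ ι (Function.invFun ι (v i)) = v i := by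
    intro i x hx
    rw [← hgf x, Finset.mem_image] at hx
    obtain ⟨w, hw, hwi⟩ := hx
    have he : Function.invFun ι (v i) = w := by
      rw [← hwi, Function.leftInverse_invFun hι]
    rw [he]
    exact ⟨hw, hwi⟩
  refine ⟨fun i => Function.invFun ι (v i), g, ?_, ?_, hg, ?_, ?_⟩
  · intro i i' hh
    apply hv
    have e1 := (hpre i i (hvf i)).2
    have e2 := (hpre i' i' (hvf i')).2
    rw [← e1, ← e2]
    exact congrArg ι hh
  · intro i i' hh
    apply hf
    rw [← hgf, ← hgf, hh]
  · exact fun i => (hpre i i (hvf i)).1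
  · exact fun i => (hpre (i + 1) i (hvf' i)).1


end HGirth

open HGirth in
/-- For every `r ≥ 2` and `g ≥ 2` there exists `n₀` such that for all `n ≥ n₀` there is an
`r`-uniform hypergraph on `n` vertices with girth greater than `g` and more than `n/(r−1)`
edges. -/

theorem exists_high_girth_many_edges (r g : ℕ) (hr : 2 ≤ r) (hg : 2 ≤ g) :
    ∃ n₀ : ℕ, ∀ n ≥ n₀, ∃ edges : Finset (Finset (Fin n)),
      (∀ E ∈ edges, E.card = r) ∧
      (∀ k, 2 ≤ k → k ≤ g → ¬ HasBergeCycle edges k) ∧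
      (n : ℝ) / ((r : ℝ) - 1) < (edges.card : ℝ) := by
  classical
  set A := 2 + (3 * (g - 1) + 3 * (g * (r - 2))) with hA
  have hA1 : A + 1 = 3 * g * (r - 1) := by
    obtain ⟨r', rfl⟩ : ∃ r', r = r' + 2 := ⟨r - 2, by omega⟩
    obtain ⟨g', rfl⟩ : ∃ g', g = g' + 2 := ⟨g - 2, by omega⟩
    have e1 : g' + 2 - 1 = g' + 1 := by omega
    have e2 : r' + 2 - 1 = r' + 1 := by omega
    have e3 : r' + 2 - 2 = r' := by omega
    simp only [hA, e1, e2, e3]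
    ring
  have hA5 : 5 ≤ A := by
    have h6 : 3 * 2 * (2 - 1) ≤ 3 * g * (r - 1) :=
      Nat.mul_le_mul (Nat.mul_le_mul le_rfl hg) (by omega)
    omega
  refine ⟨A * A, fun n hn => ?_⟩
  set sc := n / A with hsc
  have hscA : A ≤ sc := (Nat.le_div_iff_mul_le (by omega)).mpr hn
  have h1 : sc * A ≤ n := Nat.div_mul_le_self n A
  have h2 : n < sc * A + sc := by
    have hmod : A * sc + n % A = n := Nat.div_add_mod n A
    have hcm : A * sc = sc * A := Nat.mul_comm A sc
    have := Nat.mod_lt n (show 0 < A by omega)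
    omega
  have hsc1 : 1 ≤ sc := by omega
  haveI : Nonempty (Vt r g sc) := ⟨(⟨0, hsc1⟩, Sum.inl false)⟩
  have hcV : Fintype.card (Vt r g sc) = sc * A := by
    rw [card_Vt, hA]
  obtain ⟨ι⟩ := Function.Embedding.nonempty_of_card_le
    (show Fintype.card (Vt r g sc) ≤ Fintype.card (Fin n) by
      rw [hcV, Fintype.card_fin]; omega)
  refine ⟨(Finset.univ.image (E r g sc)).image (Finset.image ι), ?_, ?_, ?_⟩
  · intro Es hEs
    rw [Finset.mem_image] at hEs
    obtain ⟨E0, hE0, rfl⟩ := hEs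
    rw [Finset.mem_image] at hE0
    obtain ⟨a, -, rfl⟩ := hE0
    rw [Finset.card_image_of_injective _ ι.injective]
    exact card_E r g sc hr a
  · intro k hk2 hkg
    exact transfer (⇑ι) ι.injective _ k (no_short_cycle r g sc hg hk2 hkg)
  · rw [Finset.card_image_of_injective _ (Finset.image_injective ι.injective),
      card_edges r g sc hg]
    have hrr : (0 : ℝ) < (r : ℝ) - 1 := by
      have : (2 : ℝ) ≤ (r : ℝ) := by exact_mod_cast hr
      linarith
    rw [div_lt_iff₀ hrr]
    have hcount : n < sc * (3 * g) * (r - 1) := by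
      have he : sc * (3 * g) * (r - 1) = sc * (A + 1) := by rw [hA1]; ring
      have he2 : sc * (A + 1) = sc * A + sc := by ring
      omega
    have hcast : ((r : ℝ) - 1) = ((r - 1 : ℕ) : ℝ) := by
      have : (1 : ℕ) ≤ r := by omega
      push_cast [Nat.cast_sub this]
      ring
    rw [hcast]
    exact_mod_cast hcount
end

section
/- A C₄-free graph with minimum degree d has at least d² − d + 1 vertices. -/
/-!
Fix a vertex `v`. Every neighbour `u` of `v` has at least `d - 1` neighbours other than `v`, and
these sets are pairwise disjoint, since a vertex `w ≠ v` adjacent to two neighbours of `v` would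
close a 4-cycle through `v`. Together with `v` this gives `1 + d (d - 1)` distinct vertices.
-/

open Finset

/-- A graph is `C₄`-free if it contains no cycle of length 4. -/
def C4Free {V : Type*} (G : SimpleGraph V) : Prop :=
  ∀ (v : V) (w : G.Walk v v), w.IsCycle → w.length ≠ 4

open SimpleGraph

namespace C4Free

variable {V : Type*} {G : SimpleGraph V}

theorem eq_of_adj_of_adj (hC4 : C4Free G) {u u' v w : V} (hu : u ≠ u')
    (hvu : G.Adj v u) (hvu' : G.Adj v u') (hwu : G.Adj w u) (hwu' : G.Adj w u') : v = w := by
  by_contra hvw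
  let c : G.Walk v v := .cons hvu (.cons hwu.symm (.cons hwu' (.cons hvu'.symm .nil)))
  refine hC4 v c ?_ rfl
  simp only [c, Walk.cons_isCycle_iff, Walk.cons_isPath_iff, Walk.isPath_iff_nil,
    Walk.support_cons, Walk.support_nil, Walk.edges_cons, Walk.edges_nil, List.mem_cons,
    List.not_mem_nil, Sym2.eq_iff]
  grind [hvu.ne, hvu'.ne, hwu.ne, hwu'.ne]

variable [Fintype V] [DecidableEq V] [DecidableRel G.Adj]

theorem pairwiseDisjoint_neighborFinset_erase (hC4 : C4Free G) (v : V) :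
    (G.neighborFinset v : Set V).PairwiseDisjoint fun u => (G.neighborFinset u).erase v := by
  intro u hu u' hu' hne
  simp only [Function.onFun, Finset.disjoint_left, mem_erase, mem_neighborFinset]
  rintro w ⟨hwv, hwu⟩ ⟨-, hwu'⟩
  exact hwv (hC4.eq_of_adj_of_adj hne hwu.symm hwu'.symm (by simpa using hu) (by simpa using hu'))

theorem one_add_sum_degree_sub_one_le_card (hC4 : C4Free G) (v : V) :
    1 + ∑ u ∈ G.neighborFinset v, (G.degree u - 1) ≤ Fintype.card V := by
  have hv : v ∉ (G.neighborFinset v).biUnion fun u => (G.neighborFinset u).erase v := by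
    simp
  calc 1 + ∑ u ∈ G.neighborFinset v, (G.degree u - 1)
      = #(insert v ((G.neighborFinset v).biUnion fun u => (G.neighborFinset u).erase v)) := by
        rw [card_insert_of_notMem hv, card_biUnion (hC4.pairwiseDisjoint_neighborFinset_erase v),
          add_comm 1]
        congr 1
        refine sum_congr rfl fun u hu => ?_
        rw [card_erase_of_mem (by simpa [adj_comm] using hu), card_neighborFinset_eq_degree]
    _ ≤ Fintype.card V := card_le_univ _

end C4Free

theorem c4_free_min_degree_vertices_general {V : Type*} [Fintype V] [Nonempty V]
    (G : SimpleGraph V) [DecidableRel G.Adj] (d : ℕ)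
    (hC4 : C4Free G) (hdeg : ∀ v, d ≤ G.degree v) :
    d ^ 2 - d + 1 ≤ Fintype.card V := by
  classical
  obtain ⟨v⟩ := ‹Nonempty V›
  calc d ^ 2 - d + 1 = 1 + d * (d - 1) := by rw [Nat.mul_sub_one, sq, add_comm]
    _ ≤ 1 + G.degree v * (d - 1) := by gcongr; exact hdeg v
    _ = 1 + ∑ _u ∈ G.neighborFinset v, (d - 1) := by simp
    _ ≤ 1 + ∑ u ∈ G.neighborFinset v, (G.degree u - 1) := by
        gcongr with u; exact hdeg u
    _ ≤ Fintype.card V := hC4.one_add_sum_degree_sub_one_le_card v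

/-- A `C₄`-free graph with minimum degree at least `d ≥ 1` has at least `d² − d + 1`
vertices. -/
theorem c4_free_min_degree_vertices {V : Type*} [Fintype V] [Nonempty V]
    (G : SimpleGraph V) [DecidableRel G.Adj] (d : ℕ) (hd : 1 ≤ d)
    (hC4 : C4Free G) (hdeg : ∀ v, d ≤ G.degree v) :
    d ^ 2 - d + 1 ≤ Fintype.card V :=
  c4_free_min_degree_vertices_general G d hC4 hdeg
end

section
/- Let V be a finite set with the uniform probability measure, f : V × V → [0,∞) symmetric, and let 𝒫, 𝒬 be partitions of V with 𝒬 refining 𝒫. Then E[Φ ∘ f_𝒬] − E[Φ ∘ f_𝒫] ≥ (1/4)(E[|f_𝒬 − f_𝒫| · 1_{f_𝒫 ≤ 1}])², where Φ(x) = x² for x ≤ 2 and Φ(x) = 4x − 4 for x > 2. -/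
/-!
Write `g = f_𝒬`, `h = f_𝒫` and `D = |g - h| · 1_{h ≤ 1}`. As `𝒬` refines `𝒫`, stepping is a
conditional expectation, so `E[w (g - h)] = 0` for every `w` constant on the blocks of `𝒫`.
With `w = Φ'(h)` the energy increment becomes the mean Bregman divergence
`E[Φ(g) - Φ(h) - Φ'(h)(g - h)]`, which is pointwise at least `Ψ(D)`, where `Ψ(t) = t²/4` for
`t ≤ 2` and `Ψ(t) = t - 1` beyond. With `w = 1_{h ≤ 1}` one gets `E[D] ≤ 2`, so Jensen's
inequality for the convex `Ψ`, through its tangent at `E[D]`, gives `E[Ψ(D)] ≥ E[D]²/4`.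
-/

open Finset

/-- The stepping `f_𝒫` of `f : V × V → ℝ` with respect to a partition `𝒫` of `V`: on each
block `A × B` it is the average of `f` over `A × B`. -/
noncomputable def stepFn {V : Type*} [DecidableEq V] [Fintype V]
    (P : Finpartition (Finset.univ : Finset V)) (f : V → V → ℝ) (x y : V) : ℝ :=
  (∑ a ∈ P.part x, ∑ b ∈ P.part y, f a b) / (((P.part x).card : ℝ) * ((P.part y).card : ℝ))

noncomputable def derivPhi (x : ℝ) : ℝ := if x ≤ 2 then 2 * x else 4

noncomputable def Psi (t : ℝ) : ℝ := if t ≤ 2 then t ^ 2 / 4 else t - 1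

lemma Psi_le_Phi_sub_Phi_sub_derivPhi_mul (a b : ℝ) :
    Psi (|b - a| * if a ≤ 1 then 1 else 0) ≤ Phi b - Phi a - derivPhi a * (b - a) := by
  by_cases ha1 : a ≤ 1
  · rw [if_pos ha1, mul_one]
    unfold Psi Phi derivPhi
    rcases abs_cases (b - a) with ⟨habs, _⟩ | ⟨habs, _⟩ <;> rw [habs] <;> split_ifs <;> nlinarith
  · rw [if_neg ha1, mul_zero]
    unfold Psi Phi derivPhi
    split_ifs <;> nlinarith [sq_nonneg (b - a), sq_nonneg (b - 2)]

lemma tangent_le_Psi {m : ℝ} (hm : m ≤ 2) (t : ℝ) : m ^ 2 / 4 + m / 2 * (t - m) ≤ Psi t := by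
  unfold Psi
  split_ifs with ht
  · nlinarith [sq_nonneg (t - m)]
  · nlinarith [mul_nonneg (sub_nonneg.2 hm) (sub_nonneg.2 (le_of_not_ge ht))]

lemma sq_div_le_sum_Psi {ι : Type*} (s : Finset ι) (t : ι → ℝ) (hs : ∑ i ∈ s, t i ≤ 2 * #s) :
    (∑ i ∈ s, t i) ^ 2 / (4 * #s) ≤ ∑ i ∈ s, Psi (t i) := by
  set S := ∑ i ∈ s, t i
  set m := S / #s
  have hm : m ≤ 2 := div_le_of_le_mul₀ (Nat.cast_nonneg _) zero_le_two hs
  have htangent : ∑ i ∈ s, (m ^ 2 / 4 + m / 2 * (t i - m)) = S ^ 2 / (4 * #s) := by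
    rw [sum_add_distrib, ← mul_sum, sum_sub_distrib, sum_const, sum_const, nsmul_eq_mul,
      nsmul_eq_mul]
    rcases eq_or_ne (#s : ℝ) 0 with h | h
    · simp [m, h]
    · simp only [m, S]
      field_simp
      ring
  rw [← htangent]
  exact sum_le_sum fun i _ => tangent_le_Psi hm (t i)

lemma abs_sub_mul_ite_le {a b : ℝ} (hb : 0 ≤ b) :
    |b - a| * (if a ≤ 1 then 1 else 0) ≤ (if a ≤ 1 then 1 else 0) * (b - a) + 2 := by
  split_ifs with ha
  · rw [mul_one, one_mul, abs_le]; constructor <;> linarith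
  · simp

namespace Finpartition

variable {V : Type*} [DecidableEq V] [Fintype V] (R : Finpartition (univ : Finset V))

lemma mem_part_comm {a x : V} : a ∈ R.part x ↔ x ∈ R.part a := by
  rw [R.mem_part_iff_part_eq_part (mem_univ a) (mem_univ x),
    R.mem_part_iff_part_eq_part (mem_univ x) (mem_univ a), eq_comm]

lemma part_eq_of_mem_part {a x : V} (h : a ∈ R.part x) : R.part a = R.part x :=
  (R.mem_part_iff_part_eq_part (mem_univ a) (mem_univ x)).1 h

lemma part_subset_part_of_le {Q : Finpartition (univ : Finset V)} (h : Q ≤ R) (x : V) :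
    Q.part x ⊆ R.part x := by
  obtain ⟨t, ht, hsub⟩ := h (Q.part_mem.2 (mem_univ x))
  rwa [R.part_eq_of_mem ht (hsub (Q.mem_part (mem_univ x)))]

lemma sum_mul_average_part (w v : V → ℝ) (hw : ∀ x, ∀ a ∈ R.part x, w a = w x) :
    ∑ x, w x * ((∑ a ∈ R.part x, v a) / #(R.part x)) = ∑ x, w x * v x := by
  calc ∑ x, w x * ((∑ a ∈ R.part x, v a) / #(R.part x))
      = ∑ x, ∑ a ∈ R.part x, w a * v a / #(R.part a) := by
        refine sum_congr rfl fun x _ => ?_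
        rw [mul_div_assoc', mul_sum, sum_div]
        refine sum_congr rfl fun a ha => ?_
        rw [hw x a ha, R.part_eq_of_mem_part ha]
    _ = ∑ a, ∑ x ∈ R.part a, w a * v a / #(R.part a) :=
        sum_comm' fun x a => by simp [R.mem_part_comm]
    _ = ∑ a, w a * v a := by
        refine sum_congr rfl fun a _ => ?_
        have : (#(R.part a) : ℝ) ≠ 0 := by
          exact_mod_cast (card_pos.2 ⟨a, R.mem_part (mem_univ a)⟩).ne'
        rw [sum_const, nsmul_eq_mul, mul_div_cancel₀ _ this]

end Finpartition

section Stepping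

variable {V : Type*} [DecidableEq V] [Fintype V]

lemma stepFn_eq_of_mem_part (R : Finpartition (univ : Finset V)) (f : V → V → ℝ) {x y a b : V}
    (ha : a ∈ R.part x) (hb : b ∈ R.part y) : stepFn R f a b = stepFn R f x y := by
  rw [stepFn, stepFn, R.part_eq_of_mem_part ha, R.part_eq_of_mem_part hb]

lemma stepFn_nonneg (R : Finpartition (univ : Finset V)) {f : V → V → ℝ}
    (hf : ∀ x y, 0 ≤ f x y) (x y : V) : 0 ≤ stepFn R f x y :=
  div_nonneg (sum_nonneg fun a _ => sum_nonneg fun b _ => hf a b) (by positivity)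

lemma sum_mul_stepFn (R : Finpartition (univ : Finset V)) (f w : V → V → ℝ)
    (hw : ∀ x y, ∀ a ∈ R.part x, ∀ b ∈ R.part y, w a b = w x y) :
    ∑ x, ∑ y, w x y * stepFn R f x y = ∑ x, ∑ y, w x y * f x y := by
  have hstep : ∀ x y, stepFn R f x y =
      (∑ b ∈ R.part y, (∑ a ∈ R.part x, f a b) / #(R.part x)) / #(R.part y) := by
    intro x y
    rw [stepFn, ← sum_div, sum_comm, div_div]
  calc ∑ x, ∑ y, w x y * stepFn R f x y
      = ∑ x, ∑ y, w x y * ((∑ a ∈ R.part x, f a y) / #(R.part x)) := by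
        simp only [hstep]
        exact sum_congr rfl fun x _ => R.sum_mul_average_part (w x) _
          fun y b hb => hw x y x (R.mem_part (mem_univ x)) b hb
    _ = ∑ y, ∑ x, w x y * ((∑ a ∈ R.part x, f a y) / #(R.part x)) := sum_comm
    _ = ∑ y, ∑ x, w x y * f x y := sum_congr rfl fun y _ =>
        R.sum_mul_average_part (w · y) _ fun x a ha => hw x y a ha y (R.mem_part (mem_univ y))
    _ = ∑ x, ∑ y, w x y * f x y := sum_comm

lemma sum_mul_stepFn_sub_stepFn_of_le {P Q : Finpartition (univ : Finset V)} (hQP : Q ≤ P)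
    (f w : V → V → ℝ) (hw : ∀ x y, ∀ a ∈ P.part x, ∀ b ∈ P.part y, w a b = w x y) :
    ∑ x, ∑ y, w x y * (stepFn Q f x y - stepFn P f x y) = 0 := by
  have hwQ : ∀ x y, ∀ a ∈ Q.part x, ∀ b ∈ Q.part y, w a b = w x y := fun x y a ha b hb =>
    hw x y a (P.part_subset_part_of_le hQP x ha) b (P.part_subset_part_of_le hQP y hb)
  simp only [mul_sub, sum_sub_distrib, sum_mul_stepFn Q f w hwQ, sum_mul_stepFn P f w hw,
    sub_self]

lemma sum_Psi_le_sum_Phi_sub_sum_Phi {P Q : Finpartition (univ : Finset V)} (hQP : Q ≤ P)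
    (f : V → V → ℝ) :
    ∑ x, ∑ y, Psi (|stepFn Q f x y - stepFn P f x y| * if stepFn P f x y ≤ 1 then 1 else 0) ≤
      ∑ x, ∑ y, Phi (stepFn Q f x y) - ∑ x, ∑ y, Phi (stepFn P f x y) := by
  have horth := sum_mul_stepFn_sub_stepFn_of_le hQP f (fun x y => derivPhi (stepFn P f x y))
    fun x y a ha b hb => by rw [stepFn_eq_of_mem_part P f ha hb]
  calc _ ≤ ∑ x, ∑ y, (Phi (stepFn Q f x y) - Phi (stepFn P f x y) -
        derivPhi (stepFn P f x y) * (stepFn Q f x y - stepFn P f x y)) :=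
        sum_le_sum fun x _ => sum_le_sum fun y _ => Psi_le_Phi_sub_Phi_sub_derivPhi_mul _ _
    _ = _ := by simp only [sum_sub_distrib, horth, sub_zero]

lemma sum_abs_sub_mul_ite_le {P Q : Finpartition (univ : Finset V)} (hQP : Q ≤ P)
    {f : V → V → ℝ} (hf : ∀ x y, 0 ≤ f x y) :
    ∑ x, ∑ y, |stepFn Q f x y - stepFn P f x y| * (if stepFn P f x y ≤ 1 then 1 else 0) ≤
      2 * (Fintype.card V : ℝ) ^ 2 := by
  have horth := sum_mul_stepFn_sub_stepFn_of_le hQP f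
    (fun x y => if stepFn P f x y ≤ 1 then 1 else 0)
    fun x y a ha b hb => by rw [stepFn_eq_of_mem_part P f ha hb]
  calc _ ≤ ∑ x, ∑ y, ((if stepFn P f x y ≤ 1 then 1 else 0) *
        (stepFn Q f x y - stepFn P f x y) + 2) :=
        sum_le_sum fun x _ => sum_le_sum fun y _ => abs_sub_mul_ite_le (stepFn_nonneg Q hf x y)
    _ = 2 * (Fintype.card V : ℝ) ^ 2 := by
        simp only [sum_add_distrib, horth, sum_const, card_univ, nsmul_eq_mul]
        ring

end Stepping

theorem energy_increment_general {V : Type*} [DecidableEq V] [Fintype V]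
    (f : V → V → ℝ) (hnn : ∀ x y, 0 ≤ f x y)
    (P Q : Finpartition (Finset.univ : Finset V)) (hQP : Q ≤ P) :
    (∑ x, ∑ y, Phi (stepFn Q f x y)) / ((Fintype.card V : ℝ)) ^ 2 -
        (∑ x, ∑ y, Phi (stepFn P f x y)) / ((Fintype.card V : ℝ)) ^ 2 ≥
      (1 / 4) * ((∑ x, ∑ y, |stepFn Q f x y - stepFn P f x y| *
          (if stepFn P f x y ≤ 1 then 1 else 0)) / ((Fintype.card V : ℝ)) ^ 2) ^ 2 := by
  let D : V × V → ℝ := fun p =>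
    |stepFn Q f p.1 p.2 - stepFn P f p.1 p.2| * if stepFn P f p.1 p.2 ≤ 1 then 1 else 0
  have hcard : (#(univ : Finset (V × V)) : ℝ) = (Fintype.card V : ℝ) ^ 2 := by
    rw [card_univ, Fintype.card_prod, Nat.cast_mul, sq]
  have hsum : ∑ p, D p = ∑ x, ∑ y, D (x, y) := Fintype.sum_prod_type D
  have hjensen := sq_div_le_sum_Psi univ D
    (by rw [hcard, hsum]; exact sum_abs_sub_mul_ite_le hQP hnn)
  rw [hsum, hcard, Fintype.sum_prod_type] at hjensen
  rw [ge_iff_le, ← sub_div, show ∀ S N : ℝ, 1 / 4 * (S / N) ^ 2 = S ^ 2 / (4 * N) / N by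
    intros; ring]
  gcongr
  exact hjensen.trans (sum_Psi_le_sum_Phi_sub_sum_Phi hQP f)

/-- **Energy increment (defect) inequality for refinements.** -/
theorem energy_increment {V : Type*} [DecidableEq V] [Fintype V] [Nonempty V]
    (f : V → V → ℝ) (hsymm : ∀ x y, f x y = f y x) (hnn : ∀ x y, 0 ≤ f x y)
    (P Q : Finpartition (Finset.univ : Finset V)) (hQP : Q ≤ P) :
    (∑ x, ∑ y, Phi (stepFn Q f x y)) / ((Fintype.card V : ℝ)) ^ 2 -
        (∑ x, ∑ y, Phi (stepFn P f x y)) / ((Fintype.card V : ℝ)) ^ 2 ≥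
      (1 / 4) * ((∑ x, ∑ y, |stepFn Q f x y - stepFn P f x y| *
          (if stepFn P f x y ≤ 1 then 1 else 0)) / ((Fintype.card V : ℝ)) ^ 2) ^ 2 :=
  energy_increment_general f hnn P Q hQP
end
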